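/- arXiv:2201.09272 — 8 statements merged into one kernel-verified Lean document; each statement's English description precedes it below -/
import Mathlib

section
/- Let h : ℝ → ℝ be continuous and 2π-periodic, with h(θ) ≥ 0 for all θ and h not identically zero, and suppose ∫₀^{2π} h(θ)cos θ dθ = 0 and ∫₀^{2π} h(θ)sin θ dθ = 0. Then there exists a twice continuously differentiable function u : ℝ → ℝ satisfying u''(θ) + u(θ) = h(θ) for all θ ∈ ℝ and u(θ) > 0 for all θ ∈ ℝ. -/
open MeasureTheory intervalIntegral

/-- If `h` is continuous, `2π`-periodic, nonnegative, not identically zero,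
and orthogonal to `cos` and `sin` on `[0, 2π]`, then the forced oscillator `u'' + u = h`
has an everywhere-positive twice continuously differentiable solution. -/
theorem positive_solution_of_resonant_oscillator
    (h : ℝ → ℝ) (hcont : Continuous h)
    (hper : Function.Periodic h (2 * Real.pi))
    (hnonneg : ∀ θ : ℝ, 0 ≤ h θ)
    (hne : ∃ θ : ℝ, h θ ≠ 0)
    (hcos : ∫ θ in (0 : ℝ)..(2 * Real.pi), h θ * Real.cos θ = 0)
    (hsin : ∫ θ in (0 : ℝ)..(2 * Real.pi), h θ * Real.sin θ = 0) :
    ∃ u : ℝ → ℝ, ContDiff ℝ 2 u ∧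
      (∀ θ : ℝ, deriv (deriv u) θ + u θ = h θ) ∧
      (∀ θ : ℝ, 0 < u θ) := by
  have pi2 : (0:ℝ) < 2 * Real.pi := by positivity
  set hc : ℝ → ℝ := fun s => h s * Real.cos s with hc_def
  set hsn : ℝ → ℝ := fun s => h s * Real.sin s with hsn_def
  have hc_cont : Continuous hc := hcont.mul Real.continuous_cos
  have hsn_cont : Continuous hsn := hcont.mul Real.continuous_sin
  have hc_per : Function.Periodic hc (2*Real.pi) := hper.mul Real.cos_periodic
  have hsn_per : Function.Periodic hsn (2*Real.pi) := hper.mul Real.sin_periodic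
  have hc_int : ∀ a b : ℝ, IntervalIntegrable hc volume a b :=
    fun a b => hc_cont.intervalIntegrable a b
  have hsn_int : ∀ a b : ℝ, IntervalIntegrable hsn volume a b :=
    fun a b => hsn_cont.intervalIntegrable a b
  set ci : ℝ → ℝ := fun x => ∫ s in (0:ℝ)..x, hc s with ci_def
  set si : ℝ → ℝ := fun x => ∫ s in (0:ℝ)..x, hsn s with si_def
  have ci_diff : ∀ x : ℝ, HasDerivAt ci (hc x) x := fun x =>
    integral_hasDerivAt_right (hc_int 0 x)
      (hc_cont.aestronglyMeasurable.stronglyMeasurableAtFilter) hc_cont.continuousAt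
  have si_diff : ∀ x : ℝ, HasDerivAt si (hsn x) x := fun x =>
    integral_hasDerivAt_right (hsn_int 0 x)
      (hsn_cont.aestronglyMeasurable.stronglyMeasurableAtFilter) hsn_cont.continuousAt
  have ci_cont : Continuous ci :=
    continuous_iff_continuousAt.2 fun x => (ci_diff x).continuousAt
  have si_cont : Continuous si :=
    continuous_iff_continuousAt.2 fun x => (si_diff x).continuousAt
  have ci_sub : ∀ a b : ℝ, ∫ s in a..b, hc s = ci b - ci a := fun a b =>
    (integral_interval_sub_left (hc_int 0 b) (hc_int 0 a)).symm
  have si_sub : ∀ a b : ℝ, ∫ s in a..b, hsn s = si b - si a := fun a b =>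
    (integral_interval_sub_left (hsn_int 0 b) (hsn_int 0 a)).symm
  have ci_per : Function.Periodic ci (2*Real.pi) := by
    intro x
    have h1 : ∫ s in x..x + 2*Real.pi, hc s = ∫ s in (0:ℝ)..(0 + 2*Real.pi), hc s :=
      hc_per.intervalIntegral_add_eq x 0
    rw [zero_add] at h1
    have h2 := ci_sub x (x + 2*Real.pi)
    rw [h1, hcos] at h2
    linarith
  have si_per : Function.Periodic si (2*Real.pi) := by
    intro x
    have h1 : ∫ s in x..x + 2*Real.pi, hsn s = ∫ s in (0:ℝ)..(0 + 2*Real.pi), hsn s :=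
      hsn_per.intervalIntegral_add_eq x 0
    rw [zero_add] at h1
    have h2 := si_sub x (x + 2*Real.pi)
    rw [h1, hsin] at h2
    linarith
  -- the family of periodic solutions vanishing to first order at `a`
  set w : ℝ → ℝ → ℝ :=
    fun a θ => Real.sin θ * (ci θ - ci a) - Real.cos θ * (si θ - si a) with w_def
  have w_fwd : ∀ a θ : ℝ, w a θ = ∫ s in a..θ, Real.sin (θ - s) * h s := by
    intro a θ
    have e : (fun s => Real.sin (θ - s) * h s)
        = fun s => Real.sin θ * hc s - Real.cos θ * hsn s := by
      funext s; rw [Real.sin_sub]; simp only [hc_def, hsn_def]; ring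
    rw [e, integral_sub ((hc_int a θ).const_mul _) ((hsn_int a θ).const_mul _),
      intervalIntegral.integral_const_mul, intervalIntegral.integral_const_mul, ci_sub, si_sub]
  have w_bwd : ∀ a θ : ℝ, w a θ = ∫ s in θ..(a + 2*Real.pi), Real.sin (s - θ) * h s := by
    intro a θ
    have e : (fun s => Real.sin (s - θ) * h s)
        = fun s => Real.cos θ * hsn s - Real.sin θ * hc s := by
      funext s; rw [Real.sin_sub]; simp only [hc_def, hsn_def]; ring
    rw [e, integral_sub ((hsn_int θ _).const_mul _) ((hc_int θ _).const_mul _),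
      intervalIntegral.integral_const_mul, intervalIntegral.integral_const_mul, ci_sub, si_sub, ci_per a, si_per a]
    simp only [w_def]; ring
  have w_per_θ : ∀ a : ℝ, Function.Periodic (w a) (2*Real.pi) := by
    intro a x
    simp only [w_def, Real.sin_periodic x, Real.cos_periodic x, ci_per x, si_per x]
  have w_per_a : ∀ θ : ℝ, Function.Periodic (fun a => w a θ) (2*Real.pi) := by
    intro θ a
    simp only [w_def, ci_per a, si_per a]
  -- nonnegativity of each member of the family
  have w_nonneg : ∀ a θ : ℝ, 0 ≤ w a θ := by
    intro a θ
    have hmem := toIcoMod_mem_Ico pi2 a θ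
    have heq : w a (toIcoMod pi2 a θ) = w a θ := by
      rw [show toIcoMod pi2 a θ = θ - toIcoDiv pi2 a θ • (2*Real.pi) from
        (self_sub_toIcoDiv_zsmul pi2 a θ).symm]
      exact (w_per_θ a).sub_zsmul_eq _
    rw [← heq]
    set θ' := toIcoMod pi2 a θ with θ'def
    have h1 : a ≤ θ' := hmem.1
    have h2 : θ' < a + 2*Real.pi := hmem.2
    rcases le_total θ' (a + Real.pi) with hle | hle
    · rw [w_fwd]
      apply integral_nonneg h1
      intro s hs
      exact mul_nonneg
        (Real.sin_nonneg_of_nonneg_of_le_pi (by linarith [hs.2]) (by linarith [hs.1]))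
        (hnonneg s)
    · rw [w_bwd]
      apply integral_nonneg (by linarith)
      intro s hs
      exact mul_nonneg
        (Real.sin_nonneg_of_nonneg_of_le_pi (by linarith [hs.1]) (by linarith [hs.2]))
        (hnonneg s)
  have w_cont_a : ∀ θ : ℝ, Continuous fun a => w a θ := by
    intro θ
    simp only [w_def]
    fun_prop
  -- a member of the family that is positive at θ, with base point in [0, 2π]
  have w_pos : ∀ θ : ℝ, ∃ c ∈ Set.Icc (0:ℝ) (2*Real.pi), 0 < w c θ := by
    intro θ
    have shift : ∀ a : ℝ, 0 < w a θ → ∃ c ∈ Set.Icc (0:ℝ) (2*Real.pi), 0 < w c θ := by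
      intro a hpos
      have hmem := toIcoMod_mem_Ico pi2 0 a
      refine ⟨toIcoMod pi2 0 a, ⟨hmem.1, by have := hmem.2; linarith⟩, ?_⟩
      rw [show toIcoMod pi2 0 a = a - toIcoDiv pi2 0 a • (2*Real.pi) from
        (self_sub_toIcoDiv_zsmul pi2 0 a).symm]
      have := (w_per_a θ).sub_zsmul_eq (x := a) (toIcoDiv pi2 0 a)
      rw [this]
      exact hpos
    -- find a point where h is positive, not congruent to θ mod π
    obtain ⟨θs, hθs⟩ := hne
    have hθspos : 0 < h θs := lt_of_le_of_ne (hnonneg θs) (Ne.symm hθs)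
    obtain ⟨δ₀, hδ₀pos, hδ₀⟩ := Metric.continuousAt_iff.1 (hcont.continuousAt (x := θs))
      (h θs) hθspos
    set δ := min δ₀ Real.pi with δdef
    have hδpos : 0 < δ := lt_min hδ₀pos Real.pi_pos
    have hδπ : δ ≤ Real.pi := min_le_right _ _
    have hpos_near : ∀ s : ℝ, |s - θs| < δ → 0 < h s := by
      intro s hsd
      have := hδ₀ (show dist s θs < δ₀ by rw [Real.dist_eq]; exact lt_of_lt_of_le hsd (min_le_left _ _))
      rw [Real.dist_eq] at this
      have := abs_lt.1 this
      linarith [this.1]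
    have hex : ∃ s₀ : ℝ, 0 < h s₀ ∧ ∀ k : ℤ, s₀ - θ ≠ k * Real.pi := by
      by_cases hcase : ∀ k : ℤ, θs - θ ≠ k * Real.pi
      · exact ⟨θs, hθspos, hcase⟩
      · push_neg at hcase
        obtain ⟨k, hk⟩ := hcase
        refine ⟨θs + δ/2, hpos_near _ (by rw [add_sub_cancel_left, abs_of_pos (by linarith)]; linarith), ?_⟩
        intro m hm
        have hδ2 : δ/2 = ((m:ℝ) - k) * Real.pi := by
          have : θs + δ/2 - θ = (θs - θ) + δ/2 := by ring
          rw [this, hk] at hm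
          linarith
        have hmk : (0:ℝ) < (m:ℝ) - k := by
          by_contra hcon
          push_neg at hcon
          nlinarith [Real.pi_pos]
        have hmk1 : (1:ℝ) ≤ (m:ℝ) - (k:ℝ) := by
          have h0 : (0:ℤ) < m - k := by
            have : (0:ℝ) < ((m - k : ℤ):ℝ) := by push_cast; linarith
            exact_mod_cast this
          have h1 : (1:ℝ) ≤ ((m - k:ℤ):ℝ) := by exact_mod_cast h0
          push_cast at h1; linarith
        nlinarith [Real.pi_pos]
    obtain ⟨s₀, hs₀pos, hs₀ne⟩ := hex
    set s₁ := toIocMod pi2 (θ - Real.pi) s₀ with s₁def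
    have hs₁mem := toIocMod_mem_Ioc pi2 (θ - Real.pi) s₀
    have hl : θ - Real.pi < s₁ := hs₁mem.1
    have hr : s₁ ≤ θ + Real.pi := by have := hs₁mem.2; linarith
    have hs₁eq : s₁ = s₀ - toIocDiv pi2 (θ - Real.pi) s₀ • (2*Real.pi) :=
      (self_sub_toIocDiv_zsmul pi2 (θ - Real.pi) s₀).symm
    have hs₁pos : 0 < h s₁ := by
      rw [hs₁eq, hper.sub_zsmul_eq]
      exact hs₀pos
    have hs₁ne : ∀ m : ℤ, s₁ - θ ≠ m * Real.pi := by
      intro m hm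
      apply hs₀ne (m + 2 * toIocDiv pi2 (θ - Real.pi) s₀)
      have : s₀ - θ = (s₁ - θ) + toIocDiv pi2 (θ - Real.pi) s₀ • (2*Real.pi) := by
        rw [hs₁eq]; ring
      rw [this, hm, zsmul_eq_mul]
      push_cast
      ring
    have hrs : s₁ < θ + Real.pi := by
      rcases lt_or_eq_of_le hr with hlt | heq
      · exact hlt
      · exact absurd (by rw [heq]; ring : s₁ - θ = (1:ℤ) * Real.pi) (hs₁ne 1)
    have hneθ : s₁ ≠ θ := by
      intro e
      exact hs₁ne 0 (by rw [e]; push_cast; ring)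
    rcases lt_or_gt_of_ne hneθ with hlt | hgt
    · -- s₁ ∈ (θ - π, θ) : forward representation
      set a := (θ - Real.pi + s₁)/2 with adef
      have ha1 : θ - Real.pi < a := by rw [adef]; linarith
      have ha2 : a < s₁ := by rw [adef]; linarith
      apply shift a
      rw [w_fwd]
      apply integral_pos (by linarith)
      · exact ((Real.continuous_sin.comp (continuous_const.sub continuous_id)).mul
          hcont).continuousOn
      · intro s hs
        exact mul_nonneg
          (Real.sin_nonneg_of_nonneg_of_le_pi (by linarith [hs.2]) (by linarith [hs.1]))
          (hnonneg s)
      · exact ⟨s₁, ⟨le_of_lt ha2, le_of_lt hlt⟩,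
          mul_pos (Real.sin_pos_of_pos_of_lt_pi (by linarith) (by linarith)) hs₁pos⟩
    · -- s₁ ∈ (θ, θ + π) : backward representation
      set b := (s₁ + θ + Real.pi)/2 with bdef
      have hb1 : s₁ < b := by rw [bdef]; linarith
      have hb2 : b < θ + Real.pi := by rw [bdef]; linarith
      apply shift (b - 2*Real.pi)
      rw [w_bwd, show b - 2*Real.pi + 2*Real.pi = b by ring]
      apply integral_pos (by linarith)
      · exact ((Real.continuous_sin.comp (continuous_id.sub continuous_const)).mul
          hcont).continuousOn
      · intro s hs
        exact mul_nonneg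
          (Real.sin_nonneg_of_nonneg_of_le_pi (by linarith [hs.1]) (by linarith [hs.2]))
          (hnonneg s)
      · exact ⟨s₁, ⟨le_of_lt hgt, le_of_lt hb1⟩,
          mul_pos (Real.sin_pos_of_pos_of_lt_pi (by linarith) (by linarith)) hs₁pos⟩
  -- the averaged solution
  set A : ℝ := (2*Real.pi)⁻¹ * ∫ a in (0:ℝ)..(2*Real.pi), ci a with Adef
  set B : ℝ := (2*Real.pi)⁻¹ * ∫ a in (0:ℝ)..(2*Real.pi), si a with Bdef
  set u : ℝ → ℝ := fun θ => Real.sin θ * (ci θ - A) - Real.cos θ * (si θ - B) with u_def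
  have u_avg : ∀ θ : ℝ, u θ = (2*Real.pi)⁻¹ * ∫ a in (0:ℝ)..(2*Real.pi), w a θ := by
    intro θ
    have e : (fun a => w a θ) = fun a =>
        (Real.sin θ * ci θ - Real.cos θ * si θ) - (Real.sin θ * ci a - Real.cos θ * si a) := by
      funext a; simp only [w_def]; ring
    rw [e, integral_sub (intervalIntegrable_const)
        (((ci_cont.intervalIntegrable 0 (2*Real.pi)).const_mul _).sub
          ((si_cont.intervalIntegrable 0 (2*Real.pi)).const_mul _)),
      integral_sub ((ci_cont.intervalIntegrable 0 (2*Real.pi)).const_mul _)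
        ((si_cont.intervalIntegrable 0 (2*Real.pi)).const_mul _),
      intervalIntegral.integral_const_mul, intervalIntegral.integral_const_mul, intervalIntegral.integral_const]
    simp only [u_def, Adef, Bdef, sub_zero, smul_eq_mul]
    field_simp
    ring
  have u_pos : ∀ θ : ℝ, 0 < u θ := by
    intro θ
    rw [u_avg θ]
    apply mul_pos (inv_pos.2 pi2)
    obtain ⟨c, hc1, hc2⟩ := w_pos θ
    exact integral_pos pi2 (w_cont_a θ).continuousOn (fun x _ => w_nonneg x θ) ⟨c, hc1, hc2⟩
  -- derivatives
  set v : ℝ → ℝ := fun θ => Real.cos θ * (ci θ - A) + Real.sin θ * (si θ - B) with v_def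
  have hu1 : ∀ θ : ℝ, HasDerivAt u (v θ) θ := by
    intro θ
    have d1 : HasDerivAt (fun θ => Real.sin θ * (ci θ - A))
        (Real.cos θ * (ci θ - A) + Real.sin θ * hc θ) θ :=
      (Real.hasDerivAt_sin θ).mul ((ci_diff θ).sub_const A)
    have d2 : HasDerivAt (fun θ => Real.cos θ * (si θ - B))
        (-Real.sin θ * (si θ - B) + Real.cos θ * hsn θ) θ :=
      (Real.hasDerivAt_cos θ).mul ((si_diff θ).sub_const B)
    have := d1.sub d2
    refine this.congr_deriv ?_
    simp only [v_def, hc_def, hsn_def]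
    ring
  have hv : ∀ θ : ℝ, HasDerivAt v (h θ - u θ) θ := by
    intro θ
    have d1 : HasDerivAt (fun θ => Real.cos θ * (ci θ - A))
        (-Real.sin θ * (ci θ - A) + Real.cos θ * hc θ) θ :=
      (Real.hasDerivAt_cos θ).mul ((ci_diff θ).sub_const A)
    have d2 : HasDerivAt (fun θ => Real.sin θ * (si θ - B))
        (Real.cos θ * (si θ - B) + Real.sin θ * hsn θ) θ :=
      (Real.hasDerivAt_sin θ).mul ((si_diff θ).sub_const B)
    have := d1.add d2
    refine this.congr_deriv ?_
    simp only [u_def, hc_def, hsn_def]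
    linear_combination (h θ) * (Real.sin_sq_add_cos_sq θ)
  have deriv_u : deriv u = v := funext fun θ => (hu1 θ).deriv
  have deriv_v : deriv v = fun θ => h θ - u θ := funext fun θ => (hv θ).deriv
  have u_diff : Differentiable ℝ u := fun θ => (hu1 θ).differentiableAt
  have v_diff : Differentiable ℝ v := fun θ => (hv θ).differentiableAt
  refine ⟨u, ?_, ?_, u_pos⟩
  · rw [show (2 : WithTop ℕ∞) = 1 + 1 by norm_num, contDiff_succ_iff_deriv]
    refine ⟨u_diff, by simp, ?_⟩
    rw [deriv_u, contDiff_one_iff_deriv]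
    refine ⟨v_diff, ?_⟩
    rw [deriv_v]
    exact hcont.sub u_diff.continuous
  · intro θ
    rw [deriv_u, deriv_v]
    simp
end

section
/- Let h : ℝ → ℝ be continuous and 2π-periodic, with h(θ) ≥ 0 for all θ and h not identically zero. If the equation u'' + u = h admits a 2π-periodic twice continuously differentiable solution, then it admits a twice continuously differentiable solution u with u(θ) > 0 for all θ ∈ ℝ. -/
open MeasureTheory intervalIntegral Set Filter

lemma aux_zero_of_integral_zero {g : ℝ → ℝ} (hg : Continuous g) (hnn : ∀ x, 0 ≤ g x)
    {a b : ℝ} (hab : a < b) (hzero : (∫ x in a..b, g x) = 0) :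
    ∀ x ∈ Set.Icc a b, g x = 0 := by
  by_contra hcon
  push_neg at hcon
  obtain ⟨x, hx, hgx⟩ := hcon
  have hgx' : 0 < g x := lt_of_le_of_ne (hnn x) (Ne.symm hgx)
  have hopen : IsOpen (g ⁻¹' Set.Ioi 0) := isOpen_Ioi.preimage hg
  obtain ⟨ε, hε, hball⟩ := Metric.isOpen_iff.mp hopen x hgx'
  set l := max a (x - ε) with hl
  set r := min b (x + ε) with hr
  have hlr : l < r := by
    apply max_lt <;> apply lt_min
    · exact hab
    · linarith [hx.1]
    · linarith [hx.2]
    · linarith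
  have hsub : Set.Ioo l r ⊆ Function.support g ∩ Set.Ioc a b := by
    intro y hy
    have h1 : a < y := lt_of_le_of_lt (le_max_left _ _) hy.1
    have h2 : y ≤ b := le_of_lt (lt_of_lt_of_le hy.2 (min_le_left _ _))
    have h3 : |y - x| < ε := by
      rw [abs_lt]
      constructor
      · have := lt_of_le_of_lt (le_max_right a (x - ε)) hy.1; linarith
      · have := lt_of_lt_of_le hy.2 (min_le_right b (x + ε)); linarith
    have : g y ∈ Set.Ioi (0:ℝ) := hball (by simpa [Metric.mem_ball, Real.dist_eq] using h3)
    exact ⟨ne_of_gt this, h1, h2⟩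
  have hpos : 0 < ∫ u in a..b, g u := by
    rw [intervalIntegral.integral_pos_iff_support_of_nonneg_ae (Filter.Eventually.of_forall hnn)
      (hg.intervalIntegrable a b)]
    refine ⟨hab, lt_of_lt_of_le ?_ (measure_mono hsub)⟩
    rw [Real.volume_Ioo]
    exact ENNReal.ofReal_pos.mpr (by linarith)
  exact hpos.ne' hzero

/-- If `h` is continuous, `2π`-periodic, nonnegative, not identically zero,
and `u'' + u = h` has a `2π`-periodic `C²` solution, then it has an everywhere-positive `C²`
solution. -/
theorem positive_solution_of_exists_periodic_solution
    (h : ℝ → ℝ) (hcont : Continuous h)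
    (hper : Function.Periodic h (2 * Real.pi))
    (hnonneg : ∀ θ : ℝ, 0 ≤ h θ)
    (hne : ∃ θ : ℝ, h θ ≠ 0)
    (hexists : ∃ v : ℝ → ℝ, ContDiff ℝ 2 v ∧ Function.Periodic v (2 * Real.pi) ∧
      ∀ θ : ℝ, deriv (deriv v) θ + v θ = h θ) :
    ∃ u : ℝ → ℝ, ContDiff ℝ 2 u ∧
      (∀ θ : ℝ, deriv (deriv u) θ + u θ = h θ) ∧
      (∀ θ : ℝ, 0 < u θ) := by
  have hπ : (0:ℝ) < 2 * Real.pi := by positivity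
  have hintc : ∀ a b : ℝ, IntervalIntegrable (fun s => h s * Real.cos s) volume a b :=
    fun a b => (hcont.mul Real.continuous_cos).intervalIntegrable a b
  have hints : ∀ a b : ℝ, IntervalIntegrable (fun s => h s * Real.sin s) volume a b :=
    fun a b => (hcont.mul Real.continuous_sin).intervalIntegrable a b
  -- orthogonality
  obtain ⟨hIc, hIs⟩ : (∫ s in (0:ℝ)..(2*Real.pi), h s * Real.cos s) = 0 ∧
      (∫ s in (0:ℝ)..(2*Real.pi), h s * Real.sin s) = 0 := by
    obtain ⟨v, hv2, hvper, hvode⟩ := hexists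
    have hvdiff : Differentiable ℝ v := hv2.differentiable (by norm_num)
    have hv1 : ContDiff ℝ 1 (deriv v) := by
      have h2 : ContDiff ℝ (1+1) v := by exact_mod_cast hv2
      exact (contDiff_succ_iff_deriv.mp h2).2.2
    have hdvdiff : Differentiable ℝ (deriv v) := hv1.differentiable (by norm_num)
    have hdvper : Function.Periodic (deriv v) (2*Real.pi) := by
      intro x
      have hfun : (fun y => v (y + 2*Real.pi)) = v := funext fun y => hvper y
      calc deriv v (x + 2*Real.pi) = deriv (fun y => v (y + 2*Real.pi)) x :=
            (deriv_comp_add_const v (2*Real.pi) x).symm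
      _ = deriv v x := by rw [hfun]
    constructor
    · have key : ∀ x ∈ uIcc (0:ℝ) (2*Real.pi),
          HasDerivAt (fun s => deriv v s * Real.cos s + v s * Real.sin s) (h x * Real.cos x) x := by
        intro x _
        have h1 := ((hdvdiff x).hasDerivAt.mul (Real.hasDerivAt_cos x)).add
          ((hvdiff x).hasDerivAt.mul (Real.hasDerivAt_sin x))
        refine h1.congr_deriv (Eq.symm ?_)
        linear_combination Real.cos x * (hvode x).symm
      rw [intervalIntegral.integral_eq_sub_of_hasDerivAt key (hintc 0 (2*Real.pi))]
      have e1 : deriv v (2*Real.pi) = deriv v 0 := by simpa using hdvper 0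
      simp [Real.cos_two_pi, Real.sin_two_pi, e1]
    · have key : ∀ x ∈ uIcc (0:ℝ) (2*Real.pi),
          HasDerivAt (fun s => deriv v s * Real.sin s - v s * Real.cos s) (h x * Real.sin x) x := by
        intro x _
        have h1 := ((hdvdiff x).hasDerivAt.mul (Real.hasDerivAt_sin x)).sub
          ((hvdiff x).hasDerivAt.mul (Real.hasDerivAt_cos x))
        refine h1.congr_deriv (Eq.symm ?_)
        linear_combination Real.sin x * (hvode x).symm
      rw [intervalIntegral.integral_eq_sub_of_hasDerivAt key (hints 0 (2*Real.pi))]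
      have e1 : v (2*Real.pi) = v 0 := by simpa using hvper 0
      simp [Real.cos_two_pi, Real.sin_two_pi, e1]
  -- full-period integrals vanish at any base point
  have hpercos : Function.Periodic (fun s => h s * Real.cos s) (2*Real.pi) := by
    intro x; simp [hper x, Real.cos_add_two_pi]
  have hpersin : Function.Periodic (fun s => h s * Real.sin s) (2*Real.pi) := by
    intro x; simp [hper x, Real.sin_add_two_pi]
  have hIcA : ∀ a : ℝ, (∫ s in a..(a+2*Real.pi), h s * Real.cos s) = 0 := by
    intro a
    rw [hpercos.intervalIntegral_add_eq a 0]
    simpa using hIc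
  have hIsA : ∀ a : ℝ, (∫ s in a..(a+2*Real.pi), h s * Real.sin s) = 0 := by
    intro a
    rw [hpersin.intervalIntegral_add_eq a 0]
    simpa using hIs
  -- the building blocks
  set C : ℝ → ℝ := fun t => ∫ s in (0:ℝ)..t, h s * Real.cos s with hCdef
  set S : ℝ → ℝ := fun t => ∫ s in (0:ℝ)..t, h s * Real.sin s with hSdef
  have hCd : ∀ t, HasDerivAt C (h t * Real.cos t) t := fun t =>
    intervalIntegral.integral_hasDerivAt_right (hintc 0 t)
      ((hcont.mul Real.continuous_cos).stronglyMeasurable.stronglyMeasurableAtFilter)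
      (hcont.mul Real.continuous_cos).continuousAt
  have hSd : ∀ t, HasDerivAt S (h t * Real.sin t) t := fun t =>
    intervalIntegral.integral_hasDerivAt_right (hints 0 t)
      ((hcont.mul Real.continuous_sin).stronglyMeasurable.stronglyMeasurableAtFilter)
      (hcont.mul Real.continuous_sin).continuousAt
  have hCcont : Continuous C := by
    have : Differentiable ℝ C := fun t => (hCd t).differentiableAt
    exact this.continuous
  have hScont : Continuous S := by
    have : Differentiable ℝ S := fun t => (hSd t).differentiableAt
    exact this.continuous
  have hCsub : ∀ a b : ℝ, C b - C a = ∫ s in a..b, h s * Real.cos s := by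
    intro a b; exact intervalIntegral.integral_interval_sub_left (hintc 0 b) (hintc 0 a)
  have hSsub : ∀ a b : ℝ, S b - S a = ∫ s in a..b, h s * Real.sin s := by
    intro a b; exact intervalIntegral.integral_interval_sub_left (hints 0 b) (hints 0 a)
  have hCper : ∀ c : ℝ, C (c + 2*Real.pi) = C c := by
    intro c
    have := hCsub c (c + 2*Real.pi)
    rw [hIcA c] at this
    linarith
  have hSper : ∀ c : ℝ, S (c + 2*Real.pi) = S c := by
    intro c
    have := hSsub c (c + 2*Real.pi)
    rw [hIsA c] at this
    linarith
  set Abar : ℝ := (∫ c in (0:ℝ)..(2*Real.pi), C c) / (2*Real.pi) with hAbar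
  set Sbar : ℝ := (∫ c in (0:ℝ)..(2*Real.pi), S c) / (2*Real.pi) with hSbar
  set u : ℝ → ℝ := fun t => Real.sin t * (C t - Abar) - Real.cos t * (S t - Sbar) with hudef
  set D : ℝ → ℝ := fun t => Real.cos t * (C t - Abar) + Real.sin t * (S t - Sbar) with hDdef
  have huD : ∀ t, HasDerivAt u (D t) t := by
    intro t
    have h1 := (Real.hasDerivAt_sin t).mul ((hCd t).sub_const Abar)
    have h2 := (Real.hasDerivAt_cos t).mul ((hSd t).sub_const Sbar)
    have h3 := h1.sub h2
    refine h3.congr_deriv (Eq.symm ?_)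
    simp only [hDdef]
    ring
  have hDd : ∀ t, HasDerivAt D (h t - u t) t := by
    intro t
    have h1 := (Real.hasDerivAt_cos t).mul ((hCd t).sub_const Abar)
    have h2 := (Real.hasDerivAt_sin t).mul ((hSd t).sub_const Sbar)
    have h3 := h1.add h2
    refine h3.congr_deriv (Eq.symm ?_)
    simp only [hudef]
    linear_combination (-(h t)) * (Real.sin_sq_add_cos_sq t)
  have hderivu : deriv u = D := funext fun t => (huD t).deriv
  -- the ODE
  have hode : ∀ θ : ℝ, deriv (deriv u) θ + u θ = h θ := by
    intro θ
    rw [hderivu, (hDd θ).deriv]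
    ring
  -- smoothness
  have hC1 : ContDiff ℝ 1 C := by
    rw [contDiff_one_iff_deriv]
    refine ⟨fun t => (hCd t).differentiableAt, ?_⟩
    have : deriv C = fun t => h t * Real.cos t := funext fun t => (hCd t).deriv
    rw [this]
    exact hcont.mul Real.continuous_cos
  have hS1 : ContDiff ℝ 1 S := by
    rw [contDiff_one_iff_deriv]
    refine ⟨fun t => (hSd t).differentiableAt, ?_⟩
    have : deriv S = fun t => h t * Real.sin t := funext fun t => (hSd t).deriv
    rw [this]
    exact hcont.mul Real.continuous_sin
  have hD1 : ContDiff ℝ 1 D :=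
    (Real.contDiff_cos.mul (hC1.sub contDiff_const)).add
      (Real.contDiff_sin.mul (hS1.sub contDiff_const))
  have hu2 : ContDiff ℝ 2 u := by
    have h2 : ContDiff ℝ (1+1) u := by
      rw [contDiff_succ_iff_deriv]
      exact ⟨fun t => (huD t).differentiableAt, by simp, by rw [hderivu]; exact hD1⟩
    exact_mod_cast h2
  -- positivity
  refine ⟨u, hu2, hode, ?_⟩
  intro t
  -- the function g c = ∫_c^t sin(t-s) h(s) ds
  set g : ℝ → ℝ := fun c => Real.sin t * (C t - C c) - Real.cos t * (S t - S c) with hgdef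
  have hgcont : Continuous g := by
    apply Continuous.sub
    · exact continuous_const.mul (continuous_const.sub hCcont)
    · exact continuous_const.mul (continuous_const.sub hScont)
  have expand : ∀ a b : ℝ, (∫ s in a..b, Real.sin (t - s) * h s)
      = Real.sin t * (∫ s in a..b, h s * Real.cos s)
        - Real.cos t * (∫ s in a..b, h s * Real.sin s) := by
    intro a b
    rw [← intervalIntegral.integral_const_mul, ← intervalIntegral.integral_const_mul,
      ← intervalIntegral.integral_sub ((hintc a b).const_mul _) ((hints a b).const_mul _)]
    congr 1
    funext s
    rw [Real.sin_sub]
    ring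
  have hgeq : ∀ c : ℝ, g c = ∫ s in c..t, Real.sin (t - s) * h s := by
    intro c
    rw [expand c t, ← hCsub c t, ← hSsub c t]
  have hinttg : ∀ a b : ℝ, IntervalIntegrable (fun s => Real.sin (t - s) * h s) volume a b :=
    fun a b => ((Real.continuous_sin.comp (continuous_const.sub continuous_id)).mul
      hcont).intervalIntegrable a b
  have hfull : ∀ a : ℝ, (∫ s in a..(a+2*Real.pi), Real.sin (t - s) * h s) = 0 := by
    intro a
    rw [expand, hIcA a, hIsA a]
    ring
  have hgper : Function.Periodic g (2*Real.pi) := by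
    intro c
    simp only [hgdef, hCper c, hSper c]
  -- nonnegativity of g
  have hgnn : ∀ c, 0 ≤ g c := by
    intro c
    obtain ⟨c', hc', hgc'⟩ := hgper.exists_mem_Ico hπ c (t - 2*Real.pi)
    rw [hgc']
    have hc'1 : t - 2*Real.pi ≤ c' := hc'.1
    have hc'2 : c' < t := by have := hc'.2; linarith
    rcases le_total (t - Real.pi) c' with hcase | hcase
    · rw [hgeq c']
      apply intervalIntegral.integral_nonneg hc'2.le
      intro s hs
      apply mul_nonneg _ (hnonneg s)
      apply Real.sin_nonneg_of_nonneg_of_le_pi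
      · linarith [hs.2]
      · linarith [hs.1, Real.pi_pos]
    · have hsplit : (∫ s in c'..t, Real.sin (t - s) * h s)
          + (∫ s in t..(c'+2*Real.pi), Real.sin (t - s) * h s)
          = ∫ s in c'..(c'+2*Real.pi), Real.sin (t - s) * h s :=
        intervalIntegral.integral_add_adjacent_intervals (hinttg c' t) (hinttg t (c'+2*Real.pi))
      rw [hfull c'] at hsplit
      have hnp : (∫ s in t..(c'+2*Real.pi), Real.sin (t - s) * h s) ≤ 0 := by
        have : (0:ℝ) ≤ ∫ s in t..(c'+2*Real.pi), -(Real.sin (t - s) * h s) := by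
          apply intervalIntegral.integral_nonneg (by linarith)
          intro s hs
          rw [neg_nonneg]
          apply mul_nonpos_of_nonpos_of_nonneg _ (hnonneg s)
          apply Real.sin_nonpos_of_nonpos_of_neg_pi_le
          · linarith [hs.1]
          · linarith [hs.2]
        rw [intervalIntegral.integral_neg] at this
        linarith
      rw [hgeq c']
      linarith
  -- integral identity: ∫₀^{2π} g = 2π * u t
  have hkey : (∫ c in (0:ℝ)..(2*Real.pi), g c) = 2*Real.pi * u t := by
    have e1 : (∫ c in (0:ℝ)..(2*Real.pi), g c)
        = Real.sin t * ((2*Real.pi) * C t - ∫ c in (0:ℝ)..(2*Real.pi), C c)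
          - Real.cos t * ((2*Real.pi) * S t - ∫ c in (0:ℝ)..(2*Real.pi), S c) := by
      rw [hgdef]
      rw [intervalIntegral.integral_sub, intervalIntegral.integral_const_mul,
        intervalIntegral.integral_const_mul,
        intervalIntegral.integral_sub (intervalIntegrable_const) (hCcont.intervalIntegrable _ _),
        intervalIntegral.integral_sub (intervalIntegrable_const) (hScont.intervalIntegrable _ _),
        intervalIntegral.integral_const, intervalIntegral.integral_const]
      · simp only [smul_eq_mul]
        ring
      · exact (continuous_const.mul (continuous_const.sub hCcont)).intervalIntegrable _ _
      · exact (continuous_const.mul (continuous_const.sub hScont)).intervalIntegrable _ _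
    rw [e1, hudef]
    simp only [hAbar, hSbar]
    field_simp
  have hunn : 0 ≤ u t := by
    have h0 : (0:ℝ) ≤ ∫ c in (0:ℝ)..(2*Real.pi), g c :=
      intervalIntegral.integral_nonneg hπ.le (fun c _ => hgnn c)
    rw [hkey] at h0
    nlinarith
  rcases hunn.lt_or_eq with hpos | heq
  · exact hpos
  exfalso
  -- u t = 0 : derive h ≡ 0, contradiction
  have hint0 : (∫ c in (0:ℝ)..(2*Real.pi), g c) = 0 := by rw [hkey, ← heq]; ring
  have hg0Icc : ∀ x ∈ Set.Icc (0:ℝ) (2*Real.pi), g x = 0 :=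
    aux_zero_of_integral_zero hgcont hgnn hπ hint0
  have hg0 : ∀ c : ℝ, g c = 0 := by
    intro c
    obtain ⟨y, hy, hgy⟩ := hgper.exists_mem_Ico₀ hπ c
    rw [hgy]
    exact hg0Icc y ⟨hy.1, hy.2.le⟩
  -- from g ≡ 0, h c * sin (c - t) = 0 for all c
  have hsin0 : ∀ c : ℝ, h c * Real.sin (c - t) = 0 := by
    intro c
    have hd1 : HasDerivAt g (h c * Real.sin (c - t)) c := by
      have h1 := ((hCd c).const_sub (C t)).const_mul (Real.sin t)
      have h2 := ((hSd c).const_sub (S t)).const_mul (Real.cos t)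
      have h3 := h1.sub h2
      refine h3.congr_deriv (Eq.symm ?_)
      rw [Real.sin_sub]
      ring
    have hd2 : HasDerivAt g 0 c := by
      have : g = fun _ => (0:ℝ) := funext hg0
      rw [this]
      exact hasDerivAt_const c 0
    exact hd1.unique hd2
  -- hence h ≡ 0
  have hzero : ∀ x : ℝ, h x = 0 := by
    intro x
    by_cases hx : Real.sin (x - t) = 0
    · -- h vanishes on a punctured neighborhood
      have hball : ∀ y : ℝ, y ≠ x → |y - x| < Real.pi → h y = 0 := by
        intro y hy hyx
        have hsy : Real.sin (y - t) ≠ 0 := by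
          intro hsy
          obtain ⟨n, hn⟩ := Real.sin_eq_zero_iff.mp hx
          obtain ⟨m, hm⟩ := Real.sin_eq_zero_iff.mp hsy
          have hyx' : y - x = ((m - n : ℤ) : ℝ) * Real.pi := by push_cast; linarith
          rcases eq_or_ne m n with rfl | hmn
          · apply hy
            have : y - x = 0 := by rw [hyx']; push_cast; ring
            linarith
          · have h1 : (1:ℝ) ≤ |((m - n : ℤ) : ℝ)| := by
              rw [← Int.cast_abs]
              exact_mod_cast Int.one_le_abs (sub_ne_zero.mpr hmn)
            have h2 : |y - x| = |((m - n : ℤ) : ℝ)| * Real.pi := by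
              rw [hyx', abs_mul, abs_of_pos Real.pi_pos]
            nlinarith [Real.pi_pos]
        have := hsin0 y
        rcases mul_eq_zero.mp this with h0 | h0
        · exact h0
        · exact absurd h0 hsy
      have h1 : Filter.Tendsto h (nhdsWithin x {x}ᶜ) (nhds (h x)) :=
        (hcont.tendsto x).mono_left nhdsWithin_le_nhds
      have hev : ∀ᶠ y in nhdsWithin x {x}ᶜ, h y = 0 := by
        filter_upwards [eventually_nhdsWithin_of_eventually_nhds
          (eventually_abs_sub_lt x Real.pi_pos), self_mem_nhdsWithin] with y hy1 hy2
        exact hball y hy2 hy1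
      have h2 : Filter.Tendsto h (nhdsWithin x {x}ᶜ) (nhds 0) :=
        Filter.Tendsto.congr' (Filter.EventuallyEq.symm hev) tendsto_const_nhds
      exact tendsto_nhds_unique h1 h2
    · rcases mul_eq_zero.mp (hsin0 x) with h0 | h0
      · exact h0
      · exact absurd h0 hx
  obtain ⟨θ0, hθ0⟩ := hne
  exact hθ0 (hzero θ0)
end

section
/- Let ρ : ℝ^N → ℝ be positively homogeneous of degree 1, convex, and differentiable at every point of ℝ^N \ {0}. If ρ is not a linear form, then there exists a linear form e* on ℝ^N such that ρ(z) > e*(z) for every z ∈ ℝ^N \ {0}. -/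
open Filter Set Topology

/-- **Proposition 1.** A positively homogeneous (degree 1), convex function
`ρ : ℝ^N → ℝ` which is differentiable away from the origin and is not a linear form
admits a strictly supporting linear form. -/
theorem strictly_supporting_linear_form_of_differentiable
    (N : ℕ) (ρ : (Fin N → ℝ) → ℝ)
    (hhom : ∀ z : Fin N → ℝ, ∀ l : ℝ, 0 < l → ρ (l • z) = l * ρ z)
    (hconv : ConvexOn ℝ Set.univ ρ)
    (hdiff : ∀ z : Fin N → ℝ, z ≠ 0 → DifferentiableAt ℝ ρ z)
    (hnl : ¬ IsLinearMap ℝ ρ) :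
    ∃ e : (Fin N → ℝ) →ₗ[ℝ] ℝ, ∀ z : Fin N → ℝ, z ≠ 0 → e z < ρ z := by
  classical
  rcases Nat.eq_zero_or_pos N with hN | hN
  · refine ⟨0, fun z hz => absurd ?_ hz⟩
    subst hN; funext i; exact absurd i.2 (by omega)
  -- ρ 0 = 0
  have hρ0 : ρ 0 = 0 := by
    have h := hhom 0 2 (by norm_num)
    rw [smul_zero] at h; linarith
  -- subadditivity
  have hsub : ∀ x y : Fin N → ℝ, ρ (x + y) ≤ ρ x + ρ y := by
    intro x y
    have h1 := hconv.2 (Set.mem_univ x) (Set.mem_univ y) (le_of_lt one_half_pos)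
      (le_of_lt one_half_pos) (by norm_num)
    have h2 := hhom (x + y) (1/2) (by norm_num)
    have hxy : (1/2 : ℝ) • (x + y) = (1/2 : ℝ) • x + (1/2 : ℝ) • y := smul_add _ _ _
    rw [hxy] at h2
    simp only [smul_eq_mul] at h1
    linarith
  -- key: slope limit from the right equals the directional derivative
  have key : ∀ z : Fin N → ℝ, z ≠ 0 → ∀ u : Fin N → ℝ,
      Tendsto (fun t : ℝ => (ρ (z + t • u) - ρ z) / t) (𝓝[>] (0:ℝ))
        (𝓝 (fderiv ℝ ρ z u)) := by
    intro z hz u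
    have hline : HasDerivAt (fun t : ℝ => z + t • u) u 0 := by
      simpa using (((hasDerivAt_id (0:ℝ)).smul_const u).const_add z)
    have hF : HasFDerivAt ρ (fderiv ℝ ρ z) (z + (0:ℝ) • u) := by
      simpa using (hdiff z hz).hasFDerivAt
    have hcomp : HasDerivAt (fun t : ℝ => ρ (z + t • u)) (fderiv ℝ ρ z u) 0 :=
      hF.comp_hasDerivAt 0 hline
    have h1 := hasDerivAt_iff_tendsto_slope.mp hcomp
    have h2 : 𝓝[>] (0:ℝ) ≤ 𝓝[≠] (0:ℝ) :=
      nhdsWithin_mono 0 (fun t ht => ne_of_gt ht)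
    have h3 := h1.mono_left h2
    refine h3.congr' ?_
    filter_upwards [eventually_mem_nhdsWithin] with t ht
    simp [slope_def_field]
  -- Euler identity
  have hEuler : ∀ z : Fin N → ℝ, z ≠ 0 → fderiv ℝ ρ z z = ρ z := by
    intro z hz
    have h1 := key z hz z
    have h2 : Tendsto (fun t : ℝ => (ρ (z + t • z) - ρ z) / t) (𝓝[>] (0:ℝ)) (𝓝 (ρ z)) := by
      refine tendsto_const_nhds.congr' ?_
      filter_upwards [eventually_mem_nhdsWithin] with t (ht : 0 < t)
      have hz' : z + t • z = (1 + t) • z := by rw [add_smul, one_smul]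
      rw [hz', hhom z (1 + t) (by linarith)]
      field_simp
      ring
    exact tendsto_nhds_unique h1 h2
  -- global support
  have hsupp : ∀ z : Fin N → ℝ, z ≠ 0 → ∀ u, fderiv ℝ ρ z u ≤ ρ u := by
    intro z hz u
    refine le_of_tendsto (key z hz u) ?_
    filter_upwards [eventually_mem_nhdsWithin] with t (ht : 0 < t)
    have h1 : ρ (z + t • u) ≤ ρ z + t * ρ u := by
      have := hsub z (t • u)
      rw [hhom u t ht] at this
      exact this
    rw [div_le_iff₀ ht]
    nlinarith
  -- trivial lineality: ρ x + ρ (-x) > 0 for x ≠ 0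
  have hK : ∀ x : Fin N → ℝ, x ≠ 0 → 0 < ρ x + ρ (-x) := by
    intro x hx
    by_contra h
    push_neg at h
    have hge : 0 ≤ ρ x + ρ (-x) := by
      have := hsub x (-x)
      rw [add_neg_cancel, hρ0] at this
      linarith
    have h0 : ρ x + ρ (-x) = 0 := le_antisymm h hge
    have hadd : ∀ u, ρ (x + u) = ρ x + ρ u := by
      intro u
      have h1 : ρ (x + u) ≤ ρ x + ρ u := hsub x u
      have h2 : ρ u ≤ ρ (x + u) + ρ (-x) := by
        have := hsub (x + u) (-x)
        simp only [add_comm x u, add_neg_cancel_right] at this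
        simpa [add_comm x u] using this
      linarith
    have hlin : ∀ u, ρ u = fderiv ℝ ρ x u := by
      intro u
      have h1 := key x hx u
      have h2 : Tendsto (fun t : ℝ => (ρ (x + t • u) - ρ x) / t) (𝓝[>] (0:ℝ)) (𝓝 (ρ u)) := by
        refine tendsto_const_nhds.congr' ?_
        filter_upwards [eventually_mem_nhdsWithin] with t (ht : 0 < t)
        rw [hadd (t • u), hhom u t ht]
        field_simp
        ring
      exact (tendsto_nhds_unique h1 h2).symm
    exact hnl (by
      have : ρ = fun u => fderiv ℝ ρ x u := funext hlin
      rw [this]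
      exact ⟨fun a b => by simp, fun c a => by simp⟩)
  -- representation via standard basis
  have hrep : ∀ (f : (Fin N → ℝ) →ₗ[ℝ] ℝ) (u : Fin N → ℝ),
      f u = ∑ i, u i * f (fun j => if i = j then 1 else 0) := by
    intro f u
    have := LinearMap.pi_apply_eq_sum_univ f u
    simpa [smul_eq_mul] using this
  set grad : (Fin N → ℝ) → (Fin N → ℝ) :=
    fun z => fun i => fderiv ℝ ρ z (fun j => if i = j then 1 else 0) with hgrad
  have hrepg : ∀ z : Fin N → ℝ, ∀ u, fderiv ℝ ρ z u = ∑ i, u i * grad z i := by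
    intro z u
    simpa using hrep (fderiv ℝ ρ z).toLinearMap u
  -- the set of supporting forms, as vectors
  set C : Set (Fin N → ℝ) := {w | ∀ u, (∑ i, u i * w i) ≤ ρ u} with hC
  have hgradC : ∀ z : Fin N → ℝ, z ≠ 0 → grad z ∈ C := by
    intro z hz u
    rw [← hrepg z u]
    exact hsupp z hz u
  have hCconv : Convex ℝ C := by
    intro w1 h1 w2 h2 a b ha hb hab
    intro u
    have e1 : (∑ i, u i * (a • w1 + b • w2) i)
        = a * (∑ i, u i * w1 i) + b * (∑ i, u i * w2 i) := by
      rw [Finset.mul_sum, Finset.mul_sum, ← Finset.sum_add_distrib]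
      refine Finset.sum_congr rfl fun i _ => ?_
      simp [Pi.add_apply, Pi.smul_apply, smul_eq_mul]
      ring
    rw [e1]
    calc a * (∑ i, u i * w1 i) + b * (∑ i, u i * w2 i)
        ≤ a * ρ u + b * ρ u := by
          gcongr <;> [exact h1 u; exact h2 u]
      _ = ρ u := by rw [← add_mul, hab, one_mul]
  -- a nonzero vector to witness nonemptiness
  have hz0 : (fun j => if (⟨0, hN⟩ : Fin N) = j then (1:ℝ) else 0) ≠ 0 := by
    intro h
    have := congrFun h ⟨0, hN⟩
    simp at this
  set z0 : Fin N → ℝ := fun j => if (⟨0, hN⟩ : Fin N) = j then (1:ℝ) else 0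
  have hCne : C.Nonempty := ⟨grad z0, hgradC z0 hz0⟩
  -- the affine span of C is everything
  have hspan : affineSpan ℝ C = ⊤ := by
    by_contra hne
    have hCne' : ((affineSpan ℝ C : AffineSubspace ℝ (Fin N → ℝ)) : Set (Fin N → ℝ)).Nonempty :=
      hCne.mono (subset_affineSpan ℝ C)
    have hdir : (affineSpan ℝ C).direction ≠ ⊤ := fun htop =>
      hne ((AffineSubspace.direction_eq_top_iff_of_nonempty hCne').mp htop)
    obtain ⟨φ, hφ0, hφ⟩ := Submodule.exists_dual_map_eq_bot_of_lt_top
      (lt_top_iff_ne_top.mpr hdir) inferInstance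
    have hφzero : ∀ x ∈ (affineSpan ℝ C).direction, φ x = 0 := by
      intro x hx
      have : φ x ∈ Submodule.map φ (affineSpan ℝ C).direction :=
        Submodule.mem_map_of_mem hx
      rw [hφ] at this
      simpa using this
    set v : Fin N → ℝ := fun i => φ (fun j => if i = j then 1 else 0) with hv
    have hvne : v ≠ 0 := by
      intro h
      apply hφ0
      apply LinearMap.ext
      intro u
      rw [hrep φ u]
      have : ∀ i, v i = 0 := fun i => congrFun h i
      simp only [LinearMap.zero_apply]
      calc (∑ i, u i * φ (fun j => if i = j then 1 else 0)) = ∑ i, u i * v i := rfl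
        _ = 0 := by simp [this]
    have hconst : ∀ w1 ∈ C, ∀ w2 ∈ C, φ w1 = φ w2 := by
      intro w1 hw1 w2 hw2
      have hmem : w1 - w2 ∈ (affineSpan ℝ C).direction := by
        have := AffineSubspace.vsub_mem_direction
          (subset_affineSpan ℝ C hw1) (subset_affineSpan ℝ C hw2)
        simpa [vsub_eq_sub] using this
      have := hφzero _ hmem
      rw [map_sub] at this
      linarith
    have hpair : ∀ z : Fin N → ℝ, z ≠ 0 → φ (grad z) = ∑ i, v i * grad z i := by
      intro z hz
      rw [hrep φ (grad z)]
      exact Finset.sum_congr rfl fun i _ => mul_comm _ _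
    have h1 : ρ v = φ (grad v) := by
      rw [← hEuler v hvne, hrepg v v, hpair v hvne]
    have h2 : ρ (-v) = - φ (grad (-v)) := by
      have hnv : (-v : Fin N → ℝ) ≠ 0 := by simpa using neg_ne_zero.mpr hvne
      rw [← hEuler (-v) hnv, hrepg (-v) (-v), hpair (-v) hnv]
      rw [← Finset.sum_neg_distrib]
      refine Finset.sum_congr rfl fun i _ => ?_
      simp [Pi.neg_apply]
    have h3 : φ (grad v) = φ (grad (-v)) :=
      hconst _ (hgradC v hvne) _ (hgradC (-v) (by simpa using neg_ne_zero.mpr hvne))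
    have := hK v hvne
    rw [h1, h2, h3] at this
    linarith
  have hint : (interior C).Nonempty :=
    (hCconv.interior_nonempty_iff_affineSpan_eq_top).mpr hspan
  obtain ⟨w, hw⟩ := hint
  refine ⟨∑ i, w i • (LinearMap.proj i : (Fin N → ℝ) →ₗ[ℝ] ℝ), ?_⟩
  intro z hz
  have hez : (∑ i, w i • (LinearMap.proj i : (Fin N → ℝ) →ₗ[ℝ] ℝ)) z = ∑ i, w i * z i := by
    simp [LinearMap.proj_apply]
  rw [hez]
  -- find a small positive δ with w + δ • z ∈ C
  have hcont : Tendsto (fun δ : ℝ => w + δ • z) (𝓝 0) (𝓝 w) := by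
    have : Continuous (fun δ : ℝ => w + δ • z) :=
      continuous_const.add (continuous_id.smul continuous_const)
    have h := this.tendsto 0
    simpa using h
  have hev : ∀ᶠ δ : ℝ in 𝓝 0, w + δ • z ∈ interior C :=
    hcont.eventually (isOpen_interior.eventually_mem hw)
  have hev' : ∀ᶠ δ : ℝ in 𝓝[>] (0:ℝ), w + δ • z ∈ interior C :=
    hev.filter_mono nhdsWithin_le_nhds
  obtain ⟨δ, hδC, hδpos⟩ := (hev'.and eventually_mem_nhdsWithin).exists
  have hδpos' : (0:ℝ) < δ := hδpos
  have hmem : w + δ • z ∈ C := interior_subset hδC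
  have hle := hmem z
  have hexp : (∑ i, z i * (w + δ • z) i) = (∑ i, w i * z i) + δ * ∑ i, z i * z i := by
    rw [Finset.mul_sum, ← Finset.sum_add_distrib]
    refine Finset.sum_congr rfl fun i _ => ?_
    simp [Pi.add_apply, Pi.smul_apply, smul_eq_mul]
    ring
  rw [hexp] at hle
  have hzz : 0 < ∑ i, z i * z i := by
    obtain ⟨i, hi⟩ := Function.ne_iff.mp hz
    refine Finset.sum_pos' (fun j _ => mul_self_nonneg _) ⟨i, Finset.mem_univ i, ?_⟩
    have : z i ≠ 0 := by simpa using hi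
    exact mul_self_pos.mpr this
  nlinarith
end

section
/- Let ρ : ℝ^N → ℝ be positively homogeneous of degree 1 and convex, and suppose ρ is not a linear form. Then ρ(z) + ρ(−z) > 0 for every z ∈ ℝ^N \ {0} at which ρ is differentiable. -/
open Filter Topology

/-- Gradient inequality for a convex function differentiable at a point. -/
lemma grad_ineq_aux (N : ℕ) (ρ : (Fin N → ℝ) → ℝ)
    (hconv : ConvexOn ℝ Set.univ ρ) (z : Fin N → ℝ)
    (hd : DifferentiableAt ℝ ρ z) (x : Fin N → ℝ) :
    ρ z + fderiv ℝ ρ z (x - z) ≤ ρ x := by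
  set L := fderiv ℝ ρ z with hL
  set h : ℝ → ℝ := fun t => ρ (t • (x - z) + z) with hh
  have hc : HasDerivAt (fun s : ℝ => s • (x - z) + z) (x - z) 0 := by
    simpa using ((hasDerivAt_id (0:ℝ)).smul_const (x - z)).add_const z
  have hder : HasDerivAt h (L (x - z)) 0 := by
    have hf : HasFDerivAt ρ L ((0 : ℝ) • (x - z) + z) := by
      simpa using hd.hasFDerivAt
    exact hf.comp_hasDerivAt 0 hc
  have hconv1 : ConvexOn ℝ Set.univ h := by
    have := hconv.comp_affineMap (AffineMap.lineMap z x)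
    have heq : (ρ ∘ (AffineMap.lineMap z x)) = h := by
      funext t
      simp [hh, AffineMap.lineMap_apply]
    rw [heq] at this
    simpa using this
  have htend : Tendsto (slope h 0) (𝓝[>] 0) (𝓝 (L (x - z))) :=
    (hasDerivAt_iff_tendsto_slope.1 hder).mono_left
      (nhdsWithin_mono 0 (fun t ht => ne_of_gt ht))
  have hbound : ∀ᶠ t in 𝓝[>] (0:ℝ), slope h 0 t ≤ ρ x - ρ z := by
    filter_upwards [Ioo_mem_nhdsGT_of_mem (by norm_num : (0:ℝ) ∈ Set.Ico 0 1)] with t ht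
    have hm := hconv1.secant_mono (a := 0) (x := t) (y := 1) trivial trivial trivial
      (ne_of_gt ht.1) one_ne_zero (le_of_lt ht.2)
    have h1 : h 1 = ρ x := by simp [hh]
    have h0 : h 0 = ρ z := by simp [hh]
    rw [slope_def_field]
    calc (h t - h 0) / (t - 0) ≤ (h 1 - h 0) / (1 - 0) := by
          simpa using hm
      _ = ρ x - ρ z := by rw [h1, h0]; ring
  have := le_of_tendsto htend hbound
  linarith

/-- **Lemma 2.** If `ρ : ℝ^N → ℝ` is positively homogeneous of degree 1,
convex, and not a linear form, then `ρ(z) + ρ(-z) > 0` at every nonzero point of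
differentiability of `ρ`. -/
theorem sum_pos_at_differentiability_points
    (N : ℕ) (ρ : (Fin N → ℝ) → ℝ)
    (hhom : ∀ z : Fin N → ℝ, ∀ l : ℝ, 0 < l → ρ (l • z) = l * ρ z)
    (hconv : ConvexOn ℝ Set.univ ρ)
    (hnl : ¬ IsLinearMap ℝ ρ) :
    ∀ z : Fin N → ℝ, z ≠ 0 → DifferentiableAt ℝ ρ z → 0 < ρ z + ρ (-z) := by
  intro z hz hd
  have hρ0 : ρ 0 = 0 := by
    have := hhom 0 2 (by norm_num)
    simp at this
    linarith
  have hsub : ∀ x y : Fin N → ℝ, ρ (x + y) ≤ ρ x + ρ y := by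
    intro x y
    have h1 := hconv.2 (Set.mem_univ x) (Set.mem_univ y)
      (by norm_num : (0:ℝ) ≤ 1/2) (by norm_num : (0:ℝ) ≤ 1/2) (by norm_num)
    simp only [smul_eq_mul] at h1
    have h2 := hhom ((1/2 : ℝ) • x + (1/2 : ℝ) • y) 2 (by norm_num)
    have h3 : (2:ℝ) • ((1/2 : ℝ) • x + (1/2 : ℝ) • y) = x + y := by
      rw [smul_add, smul_smul, smul_smul]; norm_num
    rw [h3] at h2
    linarith
  have hnonneg : 0 ≤ ρ z + ρ (-z) := by
    have := hsub z (-z)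
    simp [hρ0] at this
    linarith
  rcases lt_or_eq_of_le hnonneg with hlt | h
  · exact hlt
  exfalso
  set L := fderiv ℝ ρ z with hLdef
  have hgrad : ∀ x, ρ z + L (x - z) ≤ ρ x := grad_ineq_aux N ρ hconv z hd
  have hEuler : L z = ρ z := by
    have h1 := hgrad ((2:ℝ) • z)
    have h2 := hgrad ((1/2 : ℝ) • z)
    rw [hhom z 2 (by norm_num)] at h1
    rw [hhom z (1/2) (by norm_num)] at h2
    have e1 : (2:ℝ) • z - z = z := by module
    have e2 : (1/2 : ℝ) • z - z = (-(1/2) : ℝ) • z := by module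
    rw [e1] at h1
    rw [e2, map_smul, smul_eq_mul] at h2
    linarith
  have hge : ∀ x, L x ≤ ρ x := by
    intro x
    have := hgrad x
    rw [map_sub, hEuler] at this
    linarith
  have hgz : ρ z - L z = 0 := by rw [hEuler]; ring
  have hderg : HasFDerivAt (fun x => ρ x - L x) (0 : (Fin N → ℝ) →L[ℝ] ℝ) z := by
    have hLd : HasFDerivAt (fun x => L x) (L : (Fin N → ℝ) →L[ℝ] ℝ) z := L.hasFDerivAt
    have := hd.hasFDerivAt.sub hLd
    have e : fderiv ℝ ρ z - L = 0 := by rw [hLdef, sub_self]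
    rw [e] at this
    exact this
  have hkey : ∀ v, ρ v - L v ≤ 0 := by
    intro v
    set g : (Fin N → ℝ) → ℝ := fun x => ρ x - L x with hgdef
    have hgv : ∀ t : ℝ, 0 < t → g v ≤ g (t • v + z) / t := by
      intro t ht
      have hsplit : v = (1/t : ℝ) • (t • v + z) + (1/t : ℝ) • (-z) := by
        rw [smul_add, smul_smul, smul_neg]
        field_simp
        simp
      have h1 : ρ v ≤ ρ ((1/t : ℝ) • (t • v + z)) + ρ ((1/t : ℝ) • (-z)) := by
        calc ρ v = ρ ((1/t : ℝ) • (t • v + z) + (1/t : ℝ) • (-z)) := by rw [← hsplit]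
          _ ≤ _ := hsub _ _
      rw [hhom _ (1/t) (by positivity), hhom _ (1/t) (by positivity)] at h1
      have h2 : ρ (-z) = -ρ z := by linarith
      have h3 : L v = L ((1/t : ℝ) • (t • v + z)) + L ((1/t : ℝ) • (-z)) := by
        rw [← map_add, ← hsplit]
      rw [map_smul, map_smul, smul_eq_mul, smul_eq_mul, map_neg, hEuler] at h3
      simp only [hgdef]
      rw [h2] at h1
      have expand : 1/t * ρ (t • v + z) + 1/t * -ρ z - (1/t * L (t • v + z) + 1/t * -ρ z)
          = (ρ (t • v + z) - L (t • v + z)) / t := by field_simp; ring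
      linarith [expand]
    have hc : HasDerivAt (fun s : ℝ => s • v + z) v 0 := by
      simpa using ((hasDerivAt_id (0:ℝ)).smul_const v).add_const z
    have hderh : HasDerivAt (fun t : ℝ => g (t • v + z)) 0 0 := by
      have hf : HasFDerivAt g (0 : (Fin N → ℝ) →L[ℝ] ℝ) ((0:ℝ) • v + z) := by
        simpa using hderg
      exact hf.comp_hasDerivAt 0 hc
    have htend : Tendsto (slope (fun t : ℝ => g (t • v + z)) 0) (𝓝[>] 0) (𝓝 0) :=
      (hasDerivAt_iff_tendsto_slope.1 hderh).mono_left
        (nhdsWithin_mono 0 (fun t ht => ne_of_gt ht))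
    have hbound : ∀ᶠ t in 𝓝[>] (0:ℝ), g v ≤ slope (fun t : ℝ => g (t • v + z)) 0 t := by
      filter_upwards [self_mem_nhdsWithin] with t ht
      have h0 : g ((0:ℝ) • v + z) = 0 := by
        simp only [zero_smul, zero_add]; exact hgz
      rw [slope_def_field, h0]
      have : (g (t • v + z) - 0) / (t - 0) = g (t • v + z) / t := by ring_nf
      rw [this]
      exact hgv t ht
    exact ge_of_tendsto htend hbound
  have heq : ∀ v, ρ v = L v := fun v => le_antisymm (by linarith [hkey v]) (hge v)
  exact hnl ⟨fun x y => by rw [heq, heq, heq, map_add], fun c x => by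
    rw [heq, heq, map_smul, smul_eq_mul]⟩
end

section
/- Let ρ : ℝ^N → ℝ be positively homogeneous of degree 1 and convex, and suppose ρ(z) + ρ(−z) > 0 for every z ∈ ℝ^N \ {0}. Then there exists a linear form e* on ℝ^N such that ρ(z) > e*(z) for every z ∈ ℝ^N \ {0}. -/
open RealInnerProductSpace in
theorem aux (N : ℕ) (ρ : EuclideanSpace ℝ (Fin N) → ℝ)
    (hhom : ∀ z, ∀ l : ℝ, 0 < l → ρ (l • z) = l * ρ z)
    (hsub : ∀ x y, ρ (x + y) ≤ ρ x + ρ y)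
    (hpos : ∀ z, z ≠ 0 → 0 < ρ z + ρ (-z)) :
    ∃ e : EuclideanSpace ℝ (Fin N) →ₗ[ℝ] ℝ, ∀ z, z ≠ 0 → e z < ρ z := by
  classical
  have hρ0 : ρ 0 = 0 := by
    have := hhom 0 2 (by norm_num)
    rw [smul_zero] at this; linarith
  -- key: for each z ≠ 0, ∃ y with ⟪y, ·⟫ ≤ ρ and ⟪y, z⟫ = ρ z
  have key : ∀ z : EuclideanSpace ℝ (Fin N), z ≠ 0 →
      ∃ y : EuclideanSpace ℝ (Fin N), (∀ w, ⟪y, w⟫ ≤ ρ w) ∧ ⟪y, z⟫ = ρ z := by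
    intro z hz
    set f := LinearPMap.mkSpanSingleton (K := ℝ) (σ := RingHom.id ℝ) z (ρ z) hz with hf
    have hfle : ∀ x : f.domain, f x ≤ ρ x := by
      rintro ⟨x, hx⟩
      rcases Submodule.mem_span_singleton.mp hx with ⟨c, rfl⟩
      have happ : f ⟨c • z, hx⟩ = c * ρ z := by
        have := LinearPMap.mkSpanSingleton'_apply z (ρ z) _ c hx
        rw [smul_eq_mul] at this
        exact this
      rw [happ]
      rcases lt_trichotomy c 0 with h | h | h
      · have h1 : ρ (c • z) = (-c) * ρ (-z) := by
          have := hhom (-z) (-c) (by linarith)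
          simpa [neg_smul, smul_neg] using this
        have := hpos z hz
        rw [h1]; nlinarith
      · simp [h, hρ0]
      · rw [hhom z c h]
    obtain ⟨g, hg1, hg2⟩ := exists_extension_of_le_sublinear f ρ
      (fun c hc x => hhom x c hc) hsub hfle
    obtain ⟨y, hy⟩ := (InnerProductSpace.toDual ℝ (EuclideanSpace ℝ (Fin N))).surjective
      (LinearMap.toContinuousLinearMap g)
    refine ⟨y, ?_, ?_⟩
    · intro w
      have : g w ≤ ρ w := hg2 w
      rwa [show g w = ⟪y, w⟫ by rw [← InnerProductSpace.toDual_apply_apply, hy]; rfl] at this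
    · have h1 : g z = ρ z := by
        have := hg1 ⟨z, Submodule.mem_span_singleton_self z⟩
        rw [this]
        exact LinearPMap.mkSpanSingleton'_apply_self _ _ _ _
      rw [show ⟪y, z⟫ = g z by rw [← InnerProductSpace.toDual_apply_apply, hy]; rfl, h1]
  by_cases hz0 : ∃ z : EuclideanSpace ℝ (Fin N), z ≠ 0
  swap
  · push_neg at hz0
    exact ⟨0, fun z hz => absurd (hz0 z) hz⟩
  obtain ⟨z₀, hz₀⟩ := hz0
  set K : Set (EuclideanSpace ℝ (Fin N)) := {y | ∀ w, ⟪y, w⟫ ≤ ρ w} with hK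
  obtain ⟨y₀, hy₀, -⟩ := key z₀ hz₀
  have hKconv : Convex ℝ K := by
    intro a ha b hb s t hs ht hst
    intro w
    have := add_le_add (mul_le_mul_of_nonneg_left (ha w) hs)
      (mul_le_mul_of_nonneg_left (hb w) ht)
    calc ⟪s • a + t • b, w⟫ = s * ⟪a, w⟫ + t * ⟪b, w⟫ := by
            rw [inner_add_left, real_inner_smul_left, real_inner_smul_left]
      _ ≤ s * ρ w + t * ρ w := this
      _ = ρ w := by rw [← add_mul, hst, one_mul]
  have hint : (interior K).Nonempty := by
    rw [hKconv.interior_nonempty_iff_affineSpan_eq_top]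
    by_contra htop
    -- direction is a proper submodule
    have hy₀' : y₀ ∈ affineSpan ℝ K := subset_affineSpan ℝ K hy₀
    have hdir : (affineSpan ℝ K).direction ≠ ⊤ := by
      intro h
      exact htop ((AffineSubspace.direction_eq_top_iff_of_nonempty ⟨y₀, hy₀'⟩).mp h)
    have horth : ((affineSpan ℝ K).direction)ᗮ ≠ ⊥ := by
      rwa [ne_eq, Submodule.orthogonal_eq_bot_iff]
    obtain ⟨z, hzmem, hzne⟩ := Submodule.exists_mem_ne_zero_of_ne_bot horth
    have hconst : ∀ y ∈ K, ⟪y, z⟫ = ⟪y₀, z⟫ := by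
      intro y hy
      have hmem : y - y₀ ∈ (affineSpan ℝ K).direction := by
        simpa using AffineSubspace.vsub_mem_direction (subset_affineSpan ℝ K hy) hy₀'
      have : ⟪y - y₀, z⟫ = 0 := hzmem _ hmem
      rw [inner_sub_left] at this
      linarith
    obtain ⟨y₁, hy₁, hy₁z⟩ := key z hzne
    obtain ⟨y₂, hy₂, hy₂z⟩ := key (-z) (neg_ne_zero.mpr hzne)
    have e1 : ρ z = ⟪y₀, z⟫ := by rw [← hy₁z]; exact hconst y₁ hy₁
    have e2 : ρ (-z) = -⟪y₀, z⟫ := by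
      rw [← hy₂z, inner_neg_right]
      rw [hconst y₂ hy₂]
    have := hpos z hzne
    rw [e1, e2] at this
    linarith
  obtain ⟨e₀, he₀⟩ := hint
  refine ⟨(innerSL ℝ e₀).toLinearMap, ?_⟩
  intro z hz
  obtain ⟨δ, hδ, hball⟩ := Metric.isOpen_iff.mp isOpen_interior e₀ he₀
  set ε : ℝ := δ / (2 * ‖z‖) with hε
  have hzn : 0 < ‖z‖ := norm_pos_iff.mpr hz
  have hεpos : 0 < ε := div_pos hδ (by positivity)
  have hmem : e₀ + ε • z ∈ K := by
    apply interior_subset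
    apply hball
    rw [Metric.mem_ball, dist_eq_norm]
    have : ‖e₀ + ε • z - e₀‖ = ε * ‖z‖ := by
      rw [add_sub_cancel_left, norm_smul, Real.norm_of_nonneg hεpos.le]
    rw [this, hε]
    calc δ / (2 * ‖z‖) * ‖z‖ = δ / 2 := by field_simp
      _ < δ := by linarith
  have := hmem z
  rw [inner_add_left, real_inner_smul_left, real_inner_self_eq_norm_sq] at this
  have : ⟪e₀, z⟫ < ρ z := by nlinarith [mul_pos hεpos (pow_pos hzn 2)]
  simpa using this

/-- **Lemma 3, Minkowski.** If `ρ : ℝ^N → ℝ` is positively homogeneous of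
degree 1, convex, and satisfies `ρ(z) + ρ(-z) > 0` for every `z ≠ 0`, then `ρ` admits a
strictly supporting linear form. -/
theorem strictly_supporting_linear_form_of_sum_pos
    (N : ℕ) (ρ : (Fin N → ℝ) → ℝ)
    (hhom : ∀ z : Fin N → ℝ, ∀ l : ℝ, 0 < l → ρ (l • z) = l * ρ z)
    (hconv : ConvexOn ℝ Set.univ ρ)
    (hpos : ∀ z : Fin N → ℝ, z ≠ 0 → 0 < ρ z + ρ (-z)) :
    ∃ e : (Fin N → ℝ) →ₗ[ℝ] ℝ, ∀ z : Fin N → ℝ, z ≠ 0 → e z < ρ z := by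
  have hsub : ∀ x y : Fin N → ℝ, ρ (x + y) ≤ ρ x + ρ y := by
    intro x y
    have h := hconv.2 (Set.mem_univ x) (Set.mem_univ y)
      (by norm_num : (0:ℝ) ≤ 1/2) (by norm_num : (0:ℝ) ≤ 1/2) (by norm_num)
    have h2 := hhom ((1/2:ℝ) • x + (1/2:ℝ) • y) 2 (by norm_num)
    have h3 : (2:ℝ) • ((1/2:ℝ) • x + (1/2:ℝ) • y) = x + y := by
      rw [smul_add, smul_smul, smul_smul]; norm_num
    rw [h3] at h2
    rw [smul_eq_mul, smul_eq_mul] at h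
    rw [h2]; linarith
  obtain ⟨e, he⟩ := aux N (fun z => ρ (WithLp.ofLp z))
    (fun z l hl => by simpa using hhom (WithLp.ofLp z) l hl)
    (fun x y => by simpa using hsub (WithLp.ofLp x) (WithLp.ofLp y))
    (fun z hz => by simpa using hpos (WithLp.ofLp z) (by simpa using hz))
  exact ⟨e.comp (WithLp.linearEquiv 2 ℝ (Fin N → ℝ)).symm.toLinearMap,
    fun z hz => he (WithLp.toLp 2 z) (by simpa using hz)⟩
end

section
/- For every integer ω ≥ 3 there exists an infinitely differentiable 2π-periodic function h : ℝ → ℝ with h(θ) > 0 for all θ ∈ ℝ, satisfying ∫₀^{2π} h(θ)cos(ωθ) dθ = 0 and ∫₀^{2π} h(θ)sin(ωθ) dθ = 0, such that the equation u'' + ω²u = h has no twice continuously differentiable solution u with u(θ) > 0 for all θ ∈ ℝ. -/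
open Real intervalIntegral
set_option maxHeartbeats 1000000

lemma shift_cancel {b g : ℝ → ℝ} (hbp : Function.Periodic b (2*Real.pi))
    (hgp : Function.Periodic g (2*Real.pi))
    (c : ℝ) (hgc : ∀ x, g (x + c) = - g x) :
    (∫ θ in (0:ℝ)..(2*Real.pi), b (θ - c) * g θ)
      = - ∫ θ in (0:ℝ)..(2*Real.pi), b θ * g θ := by
  have h1 : (∫ θ in (0:ℝ)..(2*Real.pi), b (θ - c) * g θ)
      = ∫ θ in (0:ℝ)..(2*Real.pi), (fun t => -(b t * g t)) (θ - c) := by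
    refine intervalIntegral.integral_congr fun θ _ => ?_
    have h2 := hgc (θ - c)
    rw [sub_add_cancel] at h2
    simp only [h2]
    ring
  rw [h1, intervalIntegral.integral_comp_sub_right (fun t => -(b t * g t)) c]
  have hper : Function.Periodic (fun t => -(b t * g t)) (2*Real.pi) :=
    fun x => by simp [hbp x, hgp x]
  rw [show (0:ℝ) - c = -c by ring, show 2*Real.pi - c = -c + 2*Real.pi by ring]
  rw [hper.intervalIntegral_add_eq (-c) 0]
  simp [intervalIntegral.integral_neg]

lemma osc_integral (n : ℝ) (u h : ℝ → ℝ) (hu : ContDiff ℝ 2 u) (hh : Continuous h)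
    (hequ : ∀ θ, deriv (deriv u) θ + n^2 * u θ = h θ) (a b : ℝ) :
    (∫ θ in a..b, h θ * Real.sin (n*θ))
      = (deriv u b * Real.sin (n*b) - n * u b * Real.cos (n*b))
        - (deriv u a * Real.sin (n*a) - n * u a * Real.cos (n*a)) := by
  have hu' : ContDiff ℝ (1+1) u := by norm_num; exact hu
  have hu1 : ContDiff ℝ 1 (deriv u) := (contDiff_succ_iff_deriv.mp hu').2.2
  have hud : Differentiable ℝ u := (contDiff_succ_iff_deriv.mp hu').1
  have hud1 : Differentiable ℝ (deriv u) := hu1.differentiable one_ne_zero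
  set W : ℝ → ℝ := fun θ => deriv u θ * Real.sin (n*θ) - n * u θ * Real.cos (n*θ) with hW
  have key : ∀ x ∈ Set.uIcc a b, HasDerivAt W (h x * Real.sin (n*x)) x := by
    intro x _
    have h1 : HasDerivAt u (deriv u x) x := (hud x).hasDerivAt
    have h2 : HasDerivAt (deriv u) (deriv (deriv u) x) x := (hud1 x).hasDerivAt
    have hs : HasDerivAt (fun θ : ℝ => Real.sin (n*θ)) (n * Real.cos (n*x)) x := by
      simpa [mul_comm, Function.comp_def] using (Real.hasDerivAt_sin (n*x)).comp x ((hasDerivAt_id x).const_mul n)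
    have hc : HasDerivAt (fun θ : ℝ => Real.cos (n*θ)) (-(n * Real.sin (n*x))) x := by
      simpa [mul_comm, Function.comp_def] using (Real.hasDerivAt_cos (n*x)).comp x ((hasDerivAt_id x).const_mul n)
    have hd := ((h2.mul hs).sub (((h1.const_mul n).mul hc)))
    have heq : deriv (deriv u) x * Real.sin (n * x) + deriv u x * (n * Real.cos (n * x)) -
        (n * deriv u x * Real.cos (n*x) + n * u x * -(n * Real.sin (n * x)))
        = h x * Real.sin (n*x) := by
      rw [← hequ x]; ring
    rw [heq] at hd
    exact hd
  have hint : IntervalIntegrable (fun θ => h θ * Real.sin (n*θ)) MeasureTheory.volume a b :=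
    (hh.mul (Real.continuous_sin.comp (continuous_const.mul continuous_id))).intervalIntegrable a b
  simpa using intervalIntegral.integral_eq_sub_of_hasDerivAt key hint

/-- **Proposition 2.** For every integer `ω ≥ 3` there is a smooth,
`2π`-periodic, everywhere-positive forcing `h` satisfying the nonresonance conditions
at frequency `ω`, such that `u'' + ω² u = h` has no everywhere-positive `C²` solution. -/
theorem no_positive_solution_for_higher_eigenvalues
    (ω : ℕ) (hω : 3 ≤ ω) :
    ∃ h : ℝ → ℝ, ContDiff ℝ (⊤ : ℕ∞) h ∧ Function.Periodic h (2 * Real.pi) ∧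
      (∀ θ : ℝ, 0 < h θ) ∧
      (∫ θ in (0 : ℝ)..(2 * Real.pi), h θ * Real.cos (ω * θ)) = 0 ∧
      (∫ θ in (0 : ℝ)..(2 * Real.pi), h θ * Real.sin (ω * θ)) = 0 ∧
      ¬ ∃ u : ℝ → ℝ, ContDiff ℝ 2 u ∧
          (∀ θ : ℝ, deriv (deriv u) θ + (ω : ℝ) ^ 2 * u θ = h θ) ∧
          (∀ θ : ℝ, 0 < u θ) := by
  have hπ := Real.pi_pos
  set n : ℝ := (ω : ℝ) with hn
  have hn3 : (3:ℝ) ≤ n := by rw [hn]; exact_mod_cast hω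
  have hn0 : (0:ℝ) < n := by linarith
  set θs : ℝ := 3*π/(2*n) with hθs
  set ρ : ℝ := π/(3*n) with hρ
  set s : ℝ := Real.cos ρ with hs
  set c : ℝ := 3*π/n with hc
  -- basic numeric facts
  have hρ0 : 0 < ρ := by positivity
  have hρlt : ρ < π/2 := by
    rw [hρ, div_lt_div_iff₀ (by linarith) (by norm_num)]; nlinarith
  have hspos : 0 < s := Real.cos_pos_of_mem_Ioo ⟨by linarith, hρlt⟩
  have hθs2 : θs ≤ π/2 := by
    rw [hθs, div_le_div_iff₀ (by linarith) (by norm_num)]; nlinarith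
  have hρθs : ρ < θs := by
    rw [hρ, hθs, div_lt_div_iff₀ (by linarith) (by linarith)]; nlinarith
  have hcπ : c ≤ π := by
    rw [hc, div_le_iff₀ hn0]; nlinarith
  have hc0 : 0 < c := by positivity
  have hnc : n * c = 3*π := by rw [hc]; field_simp
  have hnθs : n * θs = 3*π/2 := by rw [hθs]; field_simp
  have hnρ : n * ρ = π/3 := by rw [hρ]; field_simp
  have hθsc : θs = c/2 := by rw [hθs, hc]; ring
  have hcθs : c + θs ≤ 3*π/2 := by rw [hθsc]; linarith
  have hθs0 : 0 < θs := by positivity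
  -- the bump function
  set b : ℝ → ℝ := fun θ => expNegInvGlue (Real.cos (θ - θs) - s) with hb
  have hbsmooth : ContDiff ℝ (⊤ : ℕ∞) b :=
    expNegInvGlue.contDiff.comp
      ((Real.contDiff_cos.comp (contDiff_id.sub contDiff_const)).sub contDiff_const)
  have hbcont : Continuous b := hbsmooth.continuous
  have hbnonneg : ∀ θ, 0 ≤ b θ := fun θ => expNegInvGlue.nonneg _
  have hbper : Function.Periodic b (2*π) := by
    intro x
    simp only [hb]
    rw [show x + 2*π - θs = (x - θs) + 2*π by ring, Real.cos_add_two_pi]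
  -- vanishing of b away from θs
  have hbzero : ∀ θ : ℝ, |θ - θs| ≤ π → ρ ≤ |θ - θs| → b θ = 0 := by
    intro θ h1 h2
    apply expNegInvGlue.zero_of_nonpos
    have : Real.cos (θ - θs) ≤ s := by
      rw [← Real.cos_abs (θ - θs), hs]
      exact Real.cos_le_cos_of_nonneg_of_le_pi hρ0.le h1 h2
    linarith
  -- positivity of b near θs
  have hbpos : ∀ θ : ℝ, |θ - θs| < ρ → 0 < b θ := by
    intro θ h1
    apply expNegInvGlue.pos_of_pos
    have : s < Real.cos (θ - θs) := by
      rw [← Real.cos_abs (θ - θs), hs]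
      exact Real.cos_lt_cos_of_nonneg_of_le_pi (abs_nonneg _) (by linarith) h1
    linarith
  -- key pointwise bound on [0, c]
  have hB : ∀ θ ∈ Set.Icc (0:ℝ) c, b θ * Real.sin (n*θ) ≤ -(1/2) * b θ := by
    intro θ hθ
    rcases (hbnonneg θ).eq_or_lt with h0 | h0
    · rw [← h0]; simp
    · have habs : |θ - θs| ≤ π := by
        rw [abs_le]
        exact ⟨by linarith [hθ.1, hθs2], by linarith [hθ.2, hcπ]⟩
      have hlt : |θ - θs| < ρ := by
        by_contra hcon
        push_neg at hcon
        exact h0.ne' (hbzero θ habs hcon)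
      have hδ : |n*(θ - θs)| < π/3 := by
        rw [abs_mul, abs_of_pos hn0, ← hnρ]
        exact mul_lt_mul_of_pos_left hlt hn0
      have hcosδ : 1/2 < Real.cos (n*(θ - θs)) := by
        rw [show (1/2 : ℝ) = Real.cos (π/3) from (Real.cos_pi_div_three).symm,
          ← Real.cos_abs (n*(θ - θs))]
        exact Real.cos_lt_cos_of_nonneg_of_le_pi (abs_nonneg _) (by linarith) hδ
      have hsin : Real.sin (n*θ) ≤ -(1/2) := by
        have hrw : n*θ = n*(θ - θs) + 3*π/2 := by rw [mul_sub, hnθs]; ring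
        rw [hrw, Real.sin_add]
        have c32 : Real.cos (3*π/2) = 0 := by
          rw [show (3*π/2:ℝ) = π + π/2 by ring, Real.cos_add_pi_div_two, Real.sin_pi, neg_zero]
        have s32 : Real.sin (3*π/2) = -1 := by
          rw [show (3*π/2:ℝ) = π + π/2 by ring, Real.sin_add_pi_div_two, Real.cos_pi]
        rw [c32, s32]
        nlinarith
      calc b θ * Real.sin (n*θ) ≤ b θ * (-(1/2)) :=
            mul_le_mul_of_nonneg_left hsin (hbnonneg θ)
        _ = -(1/2) * b θ := by ring
  -- the shifted bump vanishes on [0, c]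
  have hC : ∀ θ ∈ Set.Icc (0:ℝ) c, b (θ - c) = 0 := by
    intro θ hθ
    have hxup : θ - c - θs ≤ -θs := by linarith [hθ.2]
    have hxlo : -(c + θs) ≤ θ - c - θs := by linarith [hθ.1]
    have hxneg : θ - c - θs < 0 := by linarith
    have hax : |θ - c - θs| = -(θ - c - θs) := abs_of_neg hxneg
    rcases le_or_gt (-(θ - c - θs)) π with hle | hgt
    · exact hbzero (θ - c) (by rw [hax]; exact hle) (by rw [hax]; linarith)
    · apply expNegInvGlue.zero_of_nonpos
      have : Real.cos (θ - c - θs) ≤ 0 := by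
        rw [← Real.cos_neg]
        exact Real.cos_nonpos_of_pi_div_two_le_of_le (by linarith) (by linarith)
      linarith
  -- integrals
  set J : ℝ := ∫ θ in (0:ℝ)..c, b θ * Real.sin (n*θ) with hJdef
  set pos : ℝ := ∫ θ in (0:ℝ)..c, b θ with hposdef
  have hsinc : Continuous fun θ : ℝ => Real.sin (n*θ) :=
    Real.continuous_sin.comp (continuous_const.mul continuous_id)
  have hJle : J ≤ -(1/2) * pos := by
    have i1 : IntervalIntegrable (fun θ => b θ * Real.sin (n*θ)) MeasureTheory.volume 0 c :=
      (hbcont.mul hsinc).intervalIntegrable 0 c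
    have i2 : IntervalIntegrable (fun θ => -(1/2) * b θ) MeasureTheory.volume 0 c :=
      (continuous_const.mul hbcont).intervalIntegrable 0 c
    have hmono := intervalIntegral.integral_mono_on hc0.le i1 i2 hB
    rw [intervalIntegral.integral_const_mul] at hmono
    exact hmono
  have hpos : 0 < pos := by
    have h1 : (0:ℝ) ≤ θs - ρ := by linarith
    have h2 : θs + ρ ≤ c := by rw [hθsc] at hρθs ⊢; linarith
    have hmid : 0 < ∫ θ in (θs - ρ)..(θs + ρ), b θ := by
      apply intervalIntegral.intervalIntegral_pos_of_pos_on
        (hbcont.intervalIntegrable _ _)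
      · intro x hx
        exact hbpos x (abs_lt.mpr ⟨by linarith [hx.1], by linarith [hx.2]⟩)
      · linarith
    have hsplit1 : (∫ θ in (0:ℝ)..(θs - ρ), b θ) + (∫ θ in (θs - ρ)..(θs + ρ), b θ)
        = ∫ θ in (0:ℝ)..(θs + ρ), b θ :=
      intervalIntegral.integral_add_adjacent_intervals
        (hbcont.intervalIntegrable _ _) (hbcont.intervalIntegrable _ _)
    have hsplit2 : (∫ θ in (0:ℝ)..(θs + ρ), b θ) + (∫ θ in (θs + ρ)..c, b θ)
        = ∫ θ in (0:ℝ)..c, b θ :=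
      intervalIntegral.integral_add_adjacent_intervals
        (hbcont.intervalIntegrable _ _) (hbcont.intervalIntegrable _ _)
    have hnn1 : 0 ≤ ∫ θ in (0:ℝ)..(θs - ρ), b θ :=
      intervalIntegral.integral_nonneg h1 (fun x _ => hbnonneg x)
    have hnn2 : 0 ≤ ∫ θ in (θs + ρ)..c, b θ :=
      intervalIntegral.integral_nonneg h2 (fun x _ => hbnonneg x)
    rw [hposdef, ← hsplit2, ← hsplit1]
    linarith
  have hJneg : J < 0 := lt_of_le_of_lt hJle (by linarith)
  set ε : ℝ := -(n*J)/4 with hε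
  have hεpos : 0 < ε := by
    have : 0 < -(n*J) := by nlinarith
    rw [hε]; linarith
  -- trig integral facts
  have hcos2π : Real.cos (n*(2*π)) = 1 := by
    rw [hn]; exact Real.cos_nat_mul_two_pi ω
  have hsin2π : Real.sin (n*(2*π)) = 0 := by
    rw [hn, show ((ω:ℝ))*(2*π) = ((2*ω : ℕ):ℝ)*π by push_cast; ring]
    exact Real.sin_nat_mul_pi (2*ω)
  have hcosper : ∀ x, Real.cos (n*(x + 2*π)) = Real.cos (n*x) := by
    intro x
    rw [mul_add, Real.cos_add, hcos2π, hsin2π]; ring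
  have hsinper : ∀ x, Real.sin (n*(x + 2*π)) = Real.sin (n*x) := by
    intro x
    rw [mul_add, Real.sin_add, hcos2π, hsin2π]; ring
  have hcosanti : ∀ x : ℝ, Real.cos (n*(x + c)) = -Real.cos (n*x) := by
    intro x
    rw [mul_add, hnc, show n*x + 3*π = (n*x + π) + 2*π by ring,
      Real.cos_add_two_pi, Real.cos_add_pi]
  have hsinanti : ∀ x : ℝ, Real.sin (n*(x + c)) = -Real.sin (n*x) := by
    intro x
    rw [mul_add, hnc, show n*x + 3*π = (n*x + π) + 2*π by ring,
      Real.sin_add_two_pi, Real.sin_add_pi]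
  have hI0cos : (∫ θ in (0:ℝ)..(2*π), Real.cos (n*θ)) = 0 := by
    rw [intervalIntegral.integral_comp_mul_left Real.cos hn0.ne', integral_cos,
      mul_zero, Real.sin_zero, hsin2π]
    simp
  have hI0sin : (∫ θ in (0:ℝ)..(2*π), Real.sin (n*θ)) = 0 := by
    rw [intervalIntegral.integral_comp_mul_left Real.sin hn0.ne', integral_sin,
      mul_zero, Real.cos_zero, hcos2π]
    simp
  have hIcsin : (∫ θ in (0:ℝ)..c, Real.sin (n*θ)) = 2/n := by
    rw [intervalIntegral.integral_comp_mul_left Real.sin hn0.ne', integral_sin,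
      mul_zero, Real.cos_zero, hnc, show (3*π:ℝ) = π + 2*π by ring,
      Real.cos_add_two_pi, Real.cos_pi]
    rw [smul_eq_mul]
    field_simp
    norm_num
  -- splitting the integral of h against a continuous function
  have hsplit : ∀ (a₁ b₁ : ℝ) (g : ℝ → ℝ), Continuous g →
      (∫ θ in a₁..b₁, (ε + (b θ + b (θ - c))) * g θ)
        = ε * (∫ θ in a₁..b₁, g θ) + ((∫ θ in a₁..b₁, b θ * g θ)
            + (∫ θ in a₁..b₁, b (θ - c) * g θ)) := by
    intro a₁ b₁ g hg
    have e1 : (∫ θ in a₁..b₁, (ε + (b θ + b (θ - c))) * g θ)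
        = ∫ θ in a₁..b₁, (ε * g θ + (b θ * g θ + b (θ - c) * g θ)) :=
      intervalIntegral.integral_congr fun θ _ => by ring
    have i1 : IntervalIntegrable (fun θ => ε * g θ) MeasureTheory.volume a₁ b₁ :=
      (continuous_const.mul hg).intervalIntegrable _ _
    have i2 : IntervalIntegrable (fun θ => b θ * g θ) MeasureTheory.volume a₁ b₁ :=
      (hbcont.mul hg).intervalIntegrable _ _
    have i3 : IntervalIntegrable (fun θ => b (θ - c) * g θ) MeasureTheory.volume a₁ b₁ :=
      ((hbcont.comp (continuous_id.sub continuous_const)).mul hg).intervalIntegrable _ _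
    rw [e1, intervalIntegral.integral_add i1 (i2.add i3),
      intervalIntegral.integral_add i2 i3, intervalIntegral.integral_const_mul]
  refine ⟨fun θ => ε + (b θ + b (θ - c)), ?_, ?_, ?_, ?_, ?_, ?_⟩
  · exact contDiff_const.add (hbsmooth.add
      (hbsmooth.comp (contDiff_id.sub contDiff_const)))
  · intro x
    simp only
    rw [hbper x, show x + 2*π - c = (x - c) + 2*π by ring, hbper (x - c)]
  · intro θ
    have := hbnonneg θ
    have := hbnonneg (θ - c)
    simp only
    linarith
  · -- cosine nonresonance condition
    simp only [← hn]
    rw [hsplit 0 (2*π) (fun θ => Real.cos (n*θ)) (Real.continuous_cos.comp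
      (continuous_const.mul continuous_id)), hI0cos,
      shift_cancel hbper (g := fun θ => Real.cos (n*θ))
        (fun x => by exact hcosper x) c (fun x => by exact hcosanti x)]
    ring
  · -- sine nonresonance condition
    simp only [← hn]
    rw [hsplit 0 (2*π) (fun θ => Real.sin (n*θ)) (Real.continuous_sin.comp
      (continuous_const.mul continuous_id)), hI0sin,
      shift_cancel hbper (g := fun θ => Real.sin (n*θ))
        (fun x => by exact hsinper x) c (fun x => by exact hsinanti x)]
    ring
  · -- no positive solution
    rintro ⟨u, hu, hequ, hupos⟩
    have hHcont : Continuous fun θ => ε + (b θ + b (θ - c)) :=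
      continuous_const.add (hbcont.add (hbcont.comp (continuous_id.sub continuous_const)))
    have hkey := osc_integral n u (fun θ => ε + (b θ + b (θ - c))) hu hHcont
      (fun θ => by rw [hn]; exact hequ θ) 0 c
    -- compute the left side
    have hzero3 : (∫ θ in (0:ℝ)..c, b (θ - c) * Real.sin (n*θ)) = 0 := by
      have e0 : (∫ θ in (0:ℝ)..c, b (θ - c) * Real.sin (n*θ))
          = ∫ θ in (0:ℝ)..c, (0:ℝ) := by
        refine intervalIntegral.integral_congr fun θ hθ => ?_
        rw [Set.uIcc_of_le hc0.le] at hθ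
        rw [hC θ hθ, zero_mul]
      rw [e0]
      simp
    have hlhs : (∫ θ in (0:ℝ)..c, (ε + (b θ + b (θ - c))) * Real.sin (n*θ)) = J/2 := by
      rw [hsplit 0 c (fun θ => Real.sin (n*θ)) hsinc, hIcsin, hzero3, ← hJdef]
      rw [hε]
      field_simp
      ring
    rw [hlhs] at hkey
    -- compute the right side
    have hsc : Real.sin (n*c) = 0 := by
      rw [hnc, show (3*π:ℝ) = π + 2*π by ring, Real.sin_add_two_pi, Real.sin_pi]
    have hcc : Real.cos (n*c) = -1 := by
      rw [hnc, show (3*π:ℝ) = π + 2*π by ring, Real.cos_add_two_pi, Real.cos_pi]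
    rw [mul_zero, Real.sin_zero, Real.cos_zero, hsc, hcc] at hkey
    have hu0 := hupos 0
    have huc := hupos c
    nlinarith [hkey]
end

section
/- Define u₊(θ) = 1 − 2cos(2θ) − cos(4θ) and h(θ) = u₊''(θ) + 9u₊(θ). Then h(θ) > 0 for all θ ∈ ℝ, ∫₀^{2π} h(θ)cos(3θ) dθ = 0 and ∫₀^{2π} h(θ)sin(3θ) dθ = 0, and the equation u'' + 9u = h has no twice continuously differentiable solution u with u(θ) > 0 for all θ ∈ ℝ. -/
open Real

/-- The trigonometric polynomial `u₊(θ) = 1 − 2cos(2θ) − cos(4θ)`. -/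
noncomputable def uStarNine (θ : ℝ) : ℝ := 1 - 2 * Real.cos (2 * θ) - Real.cos (4 * θ)

/-- The forcing term `h = u₊'' + 9 u₊`. -/
noncomputable def hNine (θ : ℝ) : ℝ := deriv (deriv uStarNine) θ + 9 * uStarNine θ

lemma hasDerivAt_uStar (θ : ℝ) :
    HasDerivAt uStarNine (4 * Real.sin (2*θ) + 4 * Real.sin (4*θ)) θ := by
  have h1 : HasDerivAt (fun x : ℝ => Real.cos (2*x)) (-Real.sin (2*θ) * 2) θ := by
    simpa using ((hasDerivAt_id θ).const_mul 2).cos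
  have h2 : HasDerivAt (fun x : ℝ => Real.cos (4*x)) (-Real.sin (4*θ) * 4) θ := by
    simpa using ((hasDerivAt_id θ).const_mul 4).cos
  have := ((h1.const_mul 2).const_sub 1).sub h2
  exact this.congr_deriv (by ring)

lemma deriv_uStar : deriv uStarNine = fun θ => 4 * Real.sin (2*θ) + 4 * Real.sin (4*θ) :=
  funext fun θ => (hasDerivAt_uStar θ).deriv

lemma hasDerivAt_deriv_uStar (θ : ℝ) :
    HasDerivAt (deriv uStarNine) (8 * Real.cos (2*θ) + 16 * Real.cos (4*θ)) θ := by
  rw [deriv_uStar]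
  have h1 : HasDerivAt (fun x : ℝ => Real.sin (2*x)) (Real.cos (2*θ) * 2) θ := by
    simpa using ((hasDerivAt_id θ).const_mul 2).sin
  have h2 : HasDerivAt (fun x : ℝ => Real.sin (4*x)) (Real.cos (4*θ) * 4) θ := by
    simpa using ((hasDerivAt_id θ).const_mul 4).sin
  have := (h1.const_mul 4).add (h2.const_mul 4)
  exact this.congr_deriv (by ring)

lemma hNine_eq (θ : ℝ) : hNine θ = 9 - 10 * Real.cos (2*θ) + 7 * Real.cos (4*θ) := by
  have : deriv (deriv uStarNine) θ = 8 * Real.cos (2*θ) + 16 * Real.cos (4*θ) :=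
    (hasDerivAt_deriv_uStar θ).deriv
  simp only [hNine, uStarNine, this]
  ring

lemma hNine_pos (θ : ℝ) : 0 < hNine θ := by
  rw [hNine_eq]
  have h4 : Real.cos (4*θ) = 2 * Real.cos (2*θ) ^ 2 - 1 := by
    rw [show (4:ℝ)*θ = 2*(2*θ) by ring, Real.cos_two_mul]
  rw [h4]
  nlinarith [sq_nonneg (Real.cos (2*θ) - 5/14)]

lemma hNine_cont : Continuous hNine := by
  have : hNine = fun θ => 9 - 10 * Real.cos (2*θ) + 7 * Real.cos (4*θ) := funext hNine_eq
  rw [this]; fun_prop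

/-- Integration by parts identity. -/
lemma key_ibp (u : ℝ → ℝ) (hu : ContDiff ℝ 2 u) :
    (∫ θ in (0:ℝ)..Real.pi, (deriv (deriv u) θ + 9 * u θ) * Real.sin (3*θ))
      = 3 * (u 0 + u Real.pi) := by
  have hu1 : ContDiff ℝ 1 (deriv u) :=
    ((contDiff_succ_iff_deriv (n := 1)).mp (by exact_mod_cast hu)).2.2
  have hdu : ∀ θ, HasDerivAt u (deriv u θ) θ := fun θ =>
    (hu.differentiable (by norm_num)).differentiableAt.hasDerivAt
  have hddu : ∀ θ, HasDerivAt (deriv u) (deriv (deriv u) θ) θ := fun θ =>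
    (hu1.differentiable one_ne_zero).differentiableAt.hasDerivAt
  have hcont : Continuous (deriv (deriv u)) := hu1.continuous_deriv le_rfl
  have hcu : Continuous u := hu.continuous
  have hcdu : Continuous (deriv u) := hu1.continuous
  set F : ℝ → ℝ := fun θ => deriv u θ * Real.sin (3*θ) - 3 * u θ * Real.cos (3*θ) with hF
  have hder : ∀ θ ∈ Set.uIcc (0:ℝ) Real.pi, HasDerivAt F
      ((deriv (deriv u) θ + 9 * u θ) * Real.sin (3*θ)) θ := by
    intro θ _
    have hs : HasDerivAt (fun x : ℝ => Real.sin (3*x)) (Real.cos (3*θ) * 3) θ := by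
      simpa using ((hasDerivAt_id θ).const_mul 3).sin
    have hc : HasDerivAt (fun x : ℝ => Real.cos (3*x)) (-Real.sin (3*θ) * 3) θ := by
      simpa using ((hasDerivAt_id θ).const_mul 3).cos
    have := ((hddu θ).mul hs).sub (((hdu θ).const_mul 3).mul hc)
    exact this.congr_deriv (by ring)
  have hint : IntervalIntegrable (fun θ => (deriv (deriv u) θ + 9 * u θ) * Real.sin (3*θ))
      MeasureTheory.volume 0 Real.pi := by
    apply Continuous.intervalIntegrable
    fun_prop
  have := intervalIntegral.integral_eq_sub_of_hasDerivAt hder hint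
  rw [this]
  simp [hF, Real.sin_pi, Real.cos_pi]
  have h3pi : Real.sin (3*Real.pi) = 0 := by
    rw [show (3:ℝ)*Real.pi = Real.pi + 2*Real.pi by ring]
    simp [Real.sin_add]
  have h3pic : Real.cos (3*Real.pi) = -1 := by
    rw [show (3:ℝ)*Real.pi = Real.pi + 2*Real.pi by ring]
    simp [Real.cos_add]
  rw [h3pi, h3pic]
  ring

lemma uStar_contDiff : ContDiff ℝ 2 uStarNine := by
  unfold uStarNine
  have hc : ∀ c : ℝ, ContDiff ℝ 2 (fun θ : ℝ => Real.cos (c*θ)) := fun c =>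
    Real.contDiff_cos.comp (contDiff_const.mul contDiff_id)
  exact (contDiff_const.sub (contDiff_const.mul (hc 2))).sub (hc 4)

lemma p2s_cc (θ : ℝ) : Real.cos (2*θ) * Real.cos (3*θ)
    = (Real.cos (5*θ) + Real.cos θ)/2 := by
  have h1 := Real.cos_add (2*θ) (3*θ)
  have h2 := Real.cos_sub (3*θ) (2*θ)
  rw [show (2*θ+3*θ) = 5*θ by ring] at h1
  rw [show (3*θ-2*θ) = θ by ring] at h2
  linear_combination -(h1 + h2)/2

lemma p2s_cc' (θ : ℝ) : Real.cos (4*θ) * Real.cos (3*θ)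
    = (Real.cos (7*θ) + Real.cos θ)/2 := by
  have h1 := Real.cos_add (4*θ) (3*θ)
  have h2 := Real.cos_sub (4*θ) (3*θ)
  rw [show (4*θ+3*θ) = 7*θ by ring] at h1
  rw [show (4*θ-3*θ) = θ by ring] at h2
  linear_combination -(h1 + h2)/2

lemma p2s_cs (θ : ℝ) : Real.cos (2*θ) * Real.sin (3*θ)
    = (Real.sin (5*θ) + Real.sin θ)/2 := by
  have h1 := Real.sin_add (2*θ) (3*θ)
  have h2 := Real.sin_sub (3*θ) (2*θ)
  rw [show (2*θ+3*θ) = 5*θ by ring] at h1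
  rw [show (3*θ-2*θ) = θ by ring] at h2
  linear_combination -(h1 + h2)/2

lemma p2s_cs' (θ : ℝ) : Real.cos (4*θ) * Real.sin (3*θ)
    = (Real.sin (7*θ) - Real.sin θ)/2 := by
  have h1 := Real.sin_add (4*θ) (3*θ)
  have h2 := Real.sin_sub (4*θ) (3*θ)
  rw [show (4*θ+3*θ) = 7*θ by ring] at h1
  rw [show (4*θ-3*θ) = θ by ring] at h2
  linear_combination (h2 - h1)/2

lemma integrand_cos (θ : ℝ) : hNine θ * Real.cos (3*θ)
    = 9*Real.cos (3*θ) - 5*Real.cos (5*θ) - (3/2)*Real.cos θ + (7/2)*Real.cos (7*θ) := by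
  rw [hNine_eq]
  linear_combination (-10)*(p2s_cc θ) + 7*(p2s_cc' θ)

lemma integrand_sin (θ : ℝ) : hNine θ * Real.sin (3*θ)
    = 9*Real.sin (3*θ) - 5*Real.sin (5*θ) - (17/2)*Real.sin θ + (7/2)*Real.sin (7*θ) := by
  rw [hNine_eq]
  linear_combination (-10)*(p2s_cs θ) + 7*(p2s_cs' θ)

lemma int_cos_zero : (∫ θ in (0:ℝ)..(2*Real.pi), hNine θ * Real.cos (3*θ)) = 0 := by
  have hcongr : (∫ θ in (0:ℝ)..(2*Real.pi), hNine θ * Real.cos (3*θ))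
      = ∫ θ in (0:ℝ)..(2*Real.pi),
          (9*Real.cos (3*θ) - 5*Real.cos (5*θ) - (3/2)*Real.cos θ + (7/2)*Real.cos (7*θ)) := by
    congr 1; ext θ; exact integrand_cos θ
  rw [hcongr]
  set G : ℝ → ℝ := fun θ => 3*Real.sin (3*θ) - Real.sin (5*θ) - (3/2)*Real.sin θ
      + (1/2)*Real.sin (7*θ) with hG
  have hder : ∀ θ ∈ Set.uIcc (0:ℝ) (2*Real.pi), HasDerivAt G
      (9*Real.cos (3*θ) - 5*Real.cos (5*θ) - (3/2)*Real.cos θ + (7/2)*Real.cos (7*θ)) θ := by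
    intro θ _
    have h3 : HasDerivAt (fun x : ℝ => Real.sin (3*x)) (Real.cos (3*θ) * 3) θ := by
      simpa using ((hasDerivAt_id θ).const_mul 3).sin
    have h5 : HasDerivAt (fun x : ℝ => Real.sin (5*x)) (Real.cos (5*θ) * 5) θ := by
      simpa using ((hasDerivAt_id θ).const_mul 5).sin
    have h7 : HasDerivAt (fun x : ℝ => Real.sin (7*x)) (Real.cos (7*θ) * 7) θ := by
      simpa using ((hasDerivAt_id θ).const_mul 7).sin
    have h1 : HasDerivAt Real.sin (Real.cos θ) θ := Real.hasDerivAt_sin θ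
    have := (((h3.const_mul 3).sub h5).sub (h1.const_mul (3/2))).add (h7.const_mul (1/2))
    exact this.congr_deriv (by ring)
  have hint : IntervalIntegrable (fun θ =>
      9*Real.cos (3*θ) - 5*Real.cos (5*θ) - (3/2)*Real.cos θ + (7/2)*Real.cos (7*θ))
      MeasureTheory.volume 0 (2*Real.pi) := by
    apply Continuous.intervalIntegrable; fun_prop
  rw [intervalIntegral.integral_eq_sub_of_hasDerivAt hder hint]
  have s3 : Real.sin (3*(2*Real.pi)) = 0 := by
    rw [show (3:ℝ)*(2*Real.pi) = (6:ℤ)*Real.pi by push_cast; ring]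
    exact Real.sin_int_mul_pi 6
  have s5 : Real.sin (5*(2*Real.pi)) = 0 := by
    rw [show (5:ℝ)*(2*Real.pi) = (10:ℤ)*Real.pi by push_cast; ring]
    exact Real.sin_int_mul_pi 10
  have s7 : Real.sin (7*(2*Real.pi)) = 0 := by
    rw [show (7:ℝ)*(2*Real.pi) = (14:ℤ)*Real.pi by push_cast; ring]
    exact Real.sin_int_mul_pi 14
  have s2 : Real.sin (2*Real.pi) = 0 := by
    rw [show (2:ℝ)*Real.pi = (2:ℤ)*Real.pi by push_cast; ring]
    exact Real.sin_int_mul_pi 2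
  simp [hG, s3, s5, s7, s2]

lemma int_sin_zero : (∫ θ in (0:ℝ)..(2*Real.pi), hNine θ * Real.sin (3*θ)) = 0 := by
  have hcongr : (∫ θ in (0:ℝ)..(2*Real.pi), hNine θ * Real.sin (3*θ))
      = ∫ θ in (0:ℝ)..(2*Real.pi),
          (9*Real.sin (3*θ) - 5*Real.sin (5*θ) - (17/2)*Real.sin θ + (7/2)*Real.sin (7*θ)) := by
    congr 1; ext θ; exact integrand_sin θ
  rw [hcongr]
  set G : ℝ → ℝ := fun θ => -3*Real.cos (3*θ) + Real.cos (5*θ) + (17/2)*Real.cos θ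
      - (1/2)*Real.cos (7*θ) with hG
  have hder : ∀ θ ∈ Set.uIcc (0:ℝ) (2*Real.pi), HasDerivAt G
      (9*Real.sin (3*θ) - 5*Real.sin (5*θ) - (17/2)*Real.sin θ + (7/2)*Real.sin (7*θ)) θ := by
    intro θ _
    have h3 : HasDerivAt (fun x : ℝ => Real.cos (3*x)) (-Real.sin (3*θ) * 3) θ := by
      simpa using ((hasDerivAt_id θ).const_mul 3).cos
    have h5 : HasDerivAt (fun x : ℝ => Real.cos (5*x)) (-Real.sin (5*θ) * 5) θ := by
      simpa using ((hasDerivAt_id θ).const_mul 5).cos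
    have h7 : HasDerivAt (fun x : ℝ => Real.cos (7*x)) (-Real.sin (7*θ) * 7) θ := by
      simpa using ((hasDerivAt_id θ).const_mul 7).cos
    have h1 : HasDerivAt Real.cos (-Real.sin θ) θ := Real.hasDerivAt_cos θ
    have := (((h3.const_mul (-3)).add h5).add (h1.const_mul (17/2))).sub (h7.const_mul (1/2))
    exact this.congr_deriv (by ring)
  have hint : IntervalIntegrable (fun θ =>
      9*Real.sin (3*θ) - 5*Real.sin (5*θ) - (17/2)*Real.sin θ + (7/2)*Real.sin (7*θ))
      MeasureTheory.volume 0 (2*Real.pi) := by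
    apply Continuous.intervalIntegrable; fun_prop
  rw [intervalIntegral.integral_eq_sub_of_hasDerivAt hder hint]
  have c3 : Real.cos (3*(2*Real.pi)) = 1 := by
    rw [show (3:ℝ)*(2*Real.pi) = (3:ℤ)*(2*Real.pi) by push_cast; ring]
    exact Real.cos_int_mul_two_pi 3
  have c5 : Real.cos (5*(2*Real.pi)) = 1 := by
    rw [show (5:ℝ)*(2*Real.pi) = (5:ℤ)*(2*Real.pi) by push_cast; ring]
    exact Real.cos_int_mul_two_pi 5
  have c7 : Real.cos (7*(2*Real.pi)) = 1 := by
    rw [show (7:ℝ)*(2*Real.pi) = (7:ℤ)*(2*Real.pi) by push_cast; ring]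
    exact Real.cos_int_mul_two_pi 7
  have c2 : Real.cos (2*Real.pi) = 1 := Real.cos_two_pi
  simp [hG, c3, c5, c7, c2]


/-- For `h = u₊'' + 9u₊` with `u₊(θ) = 1 − 2cos(2θ) − cos(4θ)`: `h` is
everywhere positive and satisfies the nonresonance conditions at `ω = 3`, yet
`u'' + 9u = h` has no everywhere-positive `C²` solution. -/
theorem counterexample_omega_three :
    (∀ θ : ℝ, 0 < hNine θ) ∧
    (∫ θ in (0 : ℝ)..(2 * Real.pi), hNine θ * Real.cos (3 * θ)) = 0 ∧
    (∫ θ in (0 : ℝ)..(2 * Real.pi), hNine θ * Real.sin (3 * θ)) = 0 ∧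
    ¬ ∃ u : ℝ → ℝ, ContDiff ℝ 2 u ∧
        (∀ θ : ℝ, deriv (deriv u) θ + 9 * u θ = hNine θ) ∧
        (∀ θ : ℝ, 0 < u θ) := by
  refine ⟨hNine_pos, int_cos_zero, int_sin_zero, ?_⟩
  rintro ⟨u, hu, hsol, hpos⟩
  have hstar : (∫ θ in (0:ℝ)..Real.pi, hNine θ * Real.sin (3*θ))
      = 3 * (uStarNine 0 + uStarNine Real.pi) := key_ibp uStarNine uStar_contDiff
  have hval : uStarNine 0 + uStarNine Real.pi = -4 := by
    have c4 : Real.cos (4*Real.pi) = 1 := by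
      rw [show (4:ℝ)*Real.pi = (2:ℤ)*(2*Real.pi) by push_cast; ring]
      exact Real.cos_int_mul_two_pi 2
    simp [uStarNine, Real.cos_two_pi, c4]
    ring
  have hu' : (∫ θ in (0:ℝ)..Real.pi, hNine θ * Real.sin (3*θ)) = 3 * (u 0 + u Real.pi) := by
    rw [← key_ibp u hu]
    congr 1; ext θ; rw [hsol θ]
  have hpos' : 0 < u 0 + u Real.pi := by
    have := hpos 0; have := hpos Real.pi; linarith
  rw [hval] at hstar
  rw [hstar] at hu'
  linarith
end

section
/- Let ρ : ℝ^N × ℝ → ℝ be convex and positively homogeneous of degree 1, and suppose the restriction of ρ to the hyperplane H = ℝ^N × {0} is a linear form, i.e. ρ(z, 0) = e*(z) for some linear form e* on ℝ^N. Then there exist real constants c and d such that ρ(z, λ) = e*(z) + cλ for all z ∈ ℝ^N and λ ≥ 0, and ρ(z, λ) = e*(z) + dλ for all z ∈ ℝ^N and λ ≤ 0. -/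
/-!
Convexity and positive homogeneity make `ρ` subadditive. A subadditive function that is odd on
the hyperplane `ℝ^N × {0}` is additive along it, so `ρ (z, λ) = e* z + ρ (0, λ)`, and on each of
the two rays `λ ≥ 0`, `λ ≤ 0` the function `λ ↦ ρ (0, λ)` is linear by homogeneity.
-/

section PositivelyHomogeneous

variable {E : Type*} [AddCommGroup E] [Module ℝ E] {f : E → ℝ}

theorem map_smul_of_nonneg_of_posHomogeneous
    (hhom : ∀ v : E, ∀ l : ℝ, 0 < l → f (l • v) = l * f v) (v : E) {l : ℝ} (hl : 0 ≤ l) :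
    f (l • v) = l * f v := by
  rcases hl.eq_or_lt with rfl | hl
  · have h2 : f 0 = 2 * f 0 := by simpa using hhom 0 2 two_pos
    rw [zero_smul, zero_mul]
    linarith
  · exact hhom v l hl

theorem ConvexOn.map_add_le_of_posHomogeneous (hconv : ConvexOn ℝ Set.univ f)
    (hhom : ∀ v : E, ∀ l : ℝ, 0 < l → f (l • v) = l * f v) (u v : E) :
    f (u + v) ≤ f u + f v := by
  have hmid := hconv.2 (Set.mem_univ u) (Set.mem_univ v) (by norm_num : (0 : ℝ) ≤ 1 / 2)
    (by norm_num : (0 : ℝ) ≤ 1 / 2) (by norm_num)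
  have hsum : u + v = (2 : ℝ) • ((1 / 2 : ℝ) • u + (1 / 2 : ℝ) • v) := by
    rw [smul_add, smul_smul, smul_smul]
    norm_num
  rw [hsum, hhom _ 2 two_pos]
  simp only [smul_eq_mul] at hmid
  linarith

end PositivelyHomogeneous

theorem map_add_eq_of_subadditive_of_map_neg {G : Type*} [AddCommGroup G] {f : G → ℝ}
    (hsub : ∀ u v, f (u + v) ≤ f u + f v) {z : G} (hneg : f (-z) = -f z) (w : G) :
    f (z + w) = f z + f w := by
  have hle := hsub z w
  have hge : f w ≤ f (-z) + f (z + w) := by simpa using hsub (-z) (z + w)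
  linarith

/-- Let `ρ : ℝ^N × ℝ → ℝ` be convex and positively homogeneous of
degree 1, whose restriction to the hyperplane `ℝ^N × {0}` equals a linear form `e*`.
Then there are constants `c`, `d` with `ρ(z, λ) = e*(z) + cλ` for `λ ≥ 0` and
`ρ(z, λ) = e*(z) + dλ` for `λ ≤ 0`. -/
theorem affine_structure_on_half_spaces
    (N : ℕ) (ρ : (Fin N → ℝ) × ℝ → ℝ)
    (hconv : ConvexOn ℝ Set.univ ρ)
    (hhom : ∀ v : (Fin N → ℝ) × ℝ, ∀ l : ℝ, 0 < l → ρ (l • v) = l * ρ v)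
    (e : (Fin N → ℝ) →ₗ[ℝ] ℝ)
    (hrest : ∀ z : Fin N → ℝ, ρ (z, 0) = e z) :
    ∃ c d : ℝ,
      (∀ z : Fin N → ℝ, ∀ l : ℝ, 0 ≤ l → ρ (z, l) = e z + c * l) ∧
      (∀ z : Fin N → ℝ, ∀ l : ℝ, l ≤ 0 → ρ (z, l) = e z + d * l) := by
  have hsplit : ∀ z l, ρ (z, l) = e z + ρ (0, l) := by
    intro z l
    have hneg : ρ (-(z, 0)) = -ρ (z, 0) := by simp [hrest]
    simpa [hrest] using map_add_eq_of_subadditive_of_map_neg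
      (hconv.map_add_le_of_posHomogeneous hhom) hneg (0, l)
  refine ⟨ρ (0, 1), -ρ (0, -1), fun z l hl => ?_, fun z l hl => ?_⟩
  · have hray : ((0, l) : (Fin N → ℝ) × ℝ) = l • (0, 1) := by simp
    rw [hsplit, hray, map_smul_of_nonneg_of_posHomogeneous hhom _ hl]
    ring
  · have hray : ((0, l) : (Fin N → ℝ) × ℝ) = (-l) • (0, -1) := by simp
    rw [hsplit, hray, map_smul_of_nonneg_of_posHomogeneous hhom _ (neg_nonneg.2 hl)]
    ring
end
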